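/- arXiv:2410.09574 — 9 statements merged into one kernel-verified Lean document; each statement's English description precedes it below -/
import Mathlib

section
/- Let n ≥ 1 and 0 ≤ k ≤ n. Let λ be a real 2×n matrix whose columns are extended to all i ∈ ℤ by λ_{i+n} = (−1)^{k−1}·λ_i, and suppose ⟨i i+1⟩_λ > 0 for all i ∈ {1,…,n}. Let λ' be the 2×n matrix with columns λ'_i = (−1)^{i−1}·(λ_{1,i}, −λ_{2,i})ᵀ for i ∈ {1,…,n}, with columns extended by λ'_{i+n} = (−1)^{n−k−1}·λ'_i. Then ⟨i i+1⟩_{λ'} = ⟨i i+1⟩_λ for all i ∈ {1,…,n}, and wind(λ') = nπ − wind(λ). -/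
open scoped Matrix

/-- Twisted-cyclic extension of a vector `x : Fin n → ℝ` to indices in `ℤ`,
with `x_{i+n} = ε • x_i`. -/
noncomputable def vecExt {n : ℕ} (ε : ℝ) (x : Fin n → ℝ) (i : ℤ) : ℝ :=
  if h : 0 < n then
    ε ^ (i / (n : ℤ)) *
      x ⟨(i % (n : ℤ)).toNat, by
        have hn : (0 : ℤ) < (n : ℤ) := by exact_mod_cast h
        have h1 : 0 ≤ i % (n : ℤ) := Int.emod_nonneg i hn.ne'
        have h2 : i % (n : ℤ) < (n : ℤ) := Int.emod_lt_of_pos i hn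
        omega⟩
  else 0

/-- Twisted-cyclic extension of the columns of a matrix. -/
noncomputable def colExt {m n : ℕ} (ε : ℝ) (A : Matrix (Fin m) (Fin n) ℝ) (i : ℤ) :
    Fin m → ℝ :=
  fun r => vecExt ε (fun j => A r j) i

/-- The bracket `⟨i j⟩ = det(λ_i, λ_j)` of two (extended) columns of a `2 × n` matrix. -/
noncomputable def brkt {n : ℕ} (ε : ℝ) (A : Matrix (Fin 2) (Fin n) ℝ) (i j : ℤ) : ℝ :=
  colExt ε A i 0 * colExt ε A j 1 - colExt ε A i 1 * colExt ε A j 0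

/-- The sign `(-1)^(k-1)` used in the twisted cyclic symmetry. -/
noncomputable def sgn (k : ℤ) : ℝ := (-1 : ℝ) ^ (k - 1)

/-- The angle in `[0, π]` between two vectors in `ℝ²`. -/
noncomputable def ang2 (v w : Fin 2 → ℝ) : ℝ :=
  Real.arccos ((v 0 * w 0 + v 1 * w 1) /
    (Real.sqrt (v 0 ^ 2 + v 1 ^ 2) * Real.sqrt (w 0 ^ 2 + w 1 ^ 2)))

/-- The total winding angle of the columns of a `2 × n` matrix. -/
noncomputable def wind {n : ℕ} (ε : ℝ) (A : Matrix (Fin 2) (Fin n) ℝ) : ℝ :=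
  ∑ i ∈ Finset.range n, ang2 (colExt ε A (i : ℤ)) (colExt ε A ((i : ℤ) + 1))

/-- The set `λ⁺_{k,n}`. -/
noncomputable def lamPlus (n : ℕ) (k : ℤ) (A : Matrix (Fin 2) (Fin n) ℝ) : Prop :=
  (∀ i ∈ Finset.range n, 0 < brkt (sgn k) A (i : ℤ) ((i : ℤ) + 1)) ∧
  wind (sgn k) A = ((k : ℝ) - 1) * Real.pi

/-- The set `λ̃⁺_{k,n}`. -/
noncomputable def latPlus (n : ℕ) (k : ℤ) (A : Matrix (Fin 2) (Fin n) ℝ) : Prop :=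
  (∀ i ∈ Finset.range n, 0 < brkt (sgn k) A (i : ℤ) ((i : ℤ) + 1)) ∧
  wind (sgn k) A = ((k : ℝ) + 1) * Real.pi

/-- The set `λλ̃⁺_{k,n}` of pairs with momentum conservation. -/
noncomputable def lamlatPlus (n : ℕ) (k : ℤ) (lam lat : Matrix (Fin 2) (Fin n) ℝ) : Prop :=
  lamPlus n k lam ∧ latPlus n k lat ∧ lam * lat.transpose = 0

/-- The row span of a matrix, as a submodule of `ℝⁿ`. -/
def rowSpan {m n : ℕ} (A : Matrix (Fin m) (Fin n) ℝ) : Submodule ℝ (Fin n → ℝ) :=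
  Submodule.span ℝ (Set.range fun i => A i)

/-- All maximal minors are nonnegative. -/
def nonnegMinors {k n : ℕ} (C : Matrix (Fin k) (Fin n) ℝ) : Prop :=
  ∀ f : Fin k → Fin n, StrictMono f → 0 ≤ (C.submatrix id f).det

/-- All maximal minors are positive. -/
def posMinors {k n : ℕ} (C : Matrix (Fin k) (Fin n) ℝ) : Prop :=
  ∀ f : Fin k → Fin n, StrictMono f → 0 < (C.submatrix id f).det

/-- `C` represents a point of the totally nonnegative Grassmannian `Gr_{≥0}(k,n)`. -/
def GrNonneg {k n : ℕ} (C : Matrix (Fin k) (Fin n) ℝ) : Prop :=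
  C.rank = k ∧ nonnegMinors C

/-- `C` represents a point of the totally positive Grassmannian `Gr_{>0}(k,n)`. -/
def GrPos {k n : ℕ} (C : Matrix (Fin k) (Fin n) ℝ) : Prop :=
  C.rank = k ∧ posMinors C

/-- `alt` negates every second column. -/
def altM {m n : ℕ} (A : Matrix (Fin m) (Fin n) ℝ) : Matrix (Fin m) (Fin n) ℝ :=
  Matrix.of fun i j => (-1 : ℝ) ^ (j : ℕ) * A i j

/-- `(2,0)`-nondegeneracy: consecutive columns are linearly independent. -/
def Nondeg20 (n : ℕ) (k : ℤ) {m : ℕ} (C : Matrix (Fin m) (Fin n) ℝ) : Prop :=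
  ∀ i : ℤ, LinearIndependent ℝ ![colExt (sgn k) C i, colExt (sgn k) C (i + 1)]

/-- `(0,2)`-nondegeneracy: `C_i ∈ span(C_{i+1}, …, C_{i+n-2})`. -/
def Nondeg02 (n : ℕ) (k : ℤ) {m : ℕ} (C : Matrix (Fin m) (Fin n) ℝ) : Prop :=
  ∀ i : ℤ, colExt (sgn k) C i ∈
    Submodule.span ℝ ((fun t : ℤ => colExt (sgn k) C t) '' Set.Icc (i + 1) (i + (n : ℤ) - 2))

/-- Connectedness of a matrix: no cyclic splitting of the columns into a direct sum. -/
def ConnMat (n : ℕ) (k : ℤ) {m : ℕ} (C : Matrix (Fin m) (Fin n) ℝ) : Prop :=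
  ¬ ∃ i j : ℤ, i < j ∧ j < i + (n : ℤ) ∧
    IsCompl (Submodule.span ℝ ((fun t : ℤ => colExt (sgn k) C t) '' Set.Icc i (j - 1)))
      (Submodule.span ℝ ((fun t : ℤ => colExt (sgn k) C t) '' Set.Icc j (i + (n : ℤ) - 1)))

/-- `C` represents a point of `Gr_{≥2}(k,n)`: totally nonnegative, connected,
and 2-nondegenerate. -/
def GrGe2 (n k : ℕ) (C : Matrix (Fin k) (Fin n) ℝ) : Prop :=
  GrNonneg C ∧ Nondeg20 n (k : ℤ) C ∧ Nondeg02 n (k : ℤ) C ∧ ConnMat n (k : ℤ) C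

/-- The orthogonal complement of a subspace of `ℝⁿ` with respect to the dot product. -/
noncomputable def perpSub {n : ℕ} (U : Submodule ℝ (Fin n → ℝ)) : Submodule ℝ (Fin n → ℝ) where
  carrier := {v | ∀ u ∈ U, dotProduct v u = 0}
  zero_mem' := fun u _ => zero_dotProduct u
  add_mem' := fun {a b} ha hb u hu => by
    rw [add_dotProduct, ha u hu, hb u hu, add_zero]
  smul_mem' := fun c v hv u hu => by
    rw [smul_dotProduct, hv u hu, smul_zero]

/-- The planar Mandelstam variables. -/
noncomputable def Mand {n : ℕ} (ε : ℝ) (lam lat : Matrix (Fin 2) (Fin n) ℝ) (i j : ℤ) : ℝ :=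
  ∑ p ∈ Finset.Ioc i j, ∑ q ∈ Finset.Ioc p j, brkt ε lam p q * brkt ε lat p q

/-- `Q` is the magic projector `Q_λ`: it is determined by its action on row vectors
(extended twisted-cyclically with sign `εx`, the brackets of `lam` using sign `εl`). -/
def IsQmat {n : ℕ} (εx εl : ℝ) (lam : Matrix (Fin 2) (Fin n) ℝ)
    (Q : Matrix (Fin n) (Fin n) ℝ) : Prop :=
  ∀ (x : Fin n → ℝ) (b : Fin n),
    Matrix.vecMul x Q b =
      (vecExt εx x (((b : ℕ) : ℤ) - 1) * brkt εl lam ((b : ℕ) : ℤ) (((b : ℕ) : ℤ) + 1)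
        + vecExt εx x ((b : ℕ) : ℤ) * brkt εl lam (((b : ℕ) : ℤ) + 1) (((b : ℕ) : ℤ) - 1)
        + vecExt εx x (((b : ℕ) : ℤ) + 1) * brkt εl lam (((b : ℕ) : ℤ) - 1) ((b : ℕ) : ℤ))
      / (brkt εl lam (((b : ℕ) : ℤ) - 1) ((b : ℕ) : ℤ) *
          brkt εl lam ((b : ℕ) : ℤ) (((b : ℕ) : ℤ) + 1))

/-- The coefficients `t^λ_i`. -/
noncomputable def tcoef {n : ℕ} (ε : ℝ) (lam : Matrix (Fin 2) (Fin n) ℝ) (j : ℤ) : ℝ :=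
  brkt ε lam (j + 1) (j - 1) / (brkt ε lam (j - 1) j * brkt ε lam j (j + 1))

/-- The involution `Θ` on `2 × n` matrices. -/
noncomputable def Theta {n : ℕ} (ε : ℝ) (lam : Matrix (Fin 2) (Fin n) ℝ) :
    Matrix (Fin 2) (Fin n) ℝ :=
  Matrix.of fun r j =>
    (-1 : ℝ) ^ (j : ℕ) * tcoef ε lam ((j : ℕ) : ℤ) * (if r = 0 then lam 0 j else -(lam 1 j))

/-- The Minkowski bilinear form on `ℝ^{2,2} ≅ ℂ²`. -/
noncomputable def minkDot (P Q : ℂ × ℂ) : ℝ :=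
  (P.1 * (starRingEnd ℂ) Q.1 - P.2 * (starRingEnd ℂ) Q.2).re

/-! Column `i` of `λ'` is column `i` of `λ` reflected in the first axis and multiplied by
`(-1)^i`, also at `i = n`, where the twists `(-1)^(n-k-1)` and `(-1)^(k-1)` differ by `(-1)^n`.
Consecutive columns thus get opposite signs: the reflection reverses the orientation of each
pair and the sign change restores it, so the brackets are unchanged, while each angle `θ`
between consecutive columns becomes `π - θ`. -/

open Finset

def reflectSmul (a : ℝ) (v : Fin 2 → ℝ) : Fin 2 → ℝ :=
  ![a * v 0, -(a * v 1)]

lemma reflectSmul_det (a b : ℝ) (v w : Fin 2 → ℝ) :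
    reflectSmul a v 0 * reflectSmul b w 1 - reflectSmul a v 1 * reflectSmul b w 0 =
      -(a * b) * (v 0 * w 1 - v 1 * w 0) := by
  simp only [reflectSmul, Matrix.cons_val_zero, Matrix.cons_val_one]
  ring

lemma ang2_reflectSmul_neg {a : ℝ} (ha : a * a = 1) (v w : Fin 2 → ℝ) :
    ang2 (reflectSmul a v) (reflectSmul (-a) w) = Real.pi - ang2 v w := by
  simp only [ang2, reflectSmul, Matrix.cons_val_zero, Matrix.cons_val_one]
  have hv : (a * v 0) ^ 2 + (-(a * v 1)) ^ 2 = v 0 ^ 2 + v 1 ^ 2 := by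
    linear_combination (v 0 ^ 2 + v 1 ^ 2) * ha
  have hw : (-a * w 0) ^ 2 + (-(-a * w 1)) ^ 2 = w 0 ^ 2 + w 1 ^ 2 := by
    linear_combination (w 0 ^ 2 + w 1 ^ 2) * ha
  have hvw : a * v 0 * (-a * w 0) + -(a * v 1) * -(-a * w 1) = -(v 0 * w 0 + v 1 * w 1) := by
    linear_combination -(v 0 * w 0 + v 1 * w 1) * ha
  rw [hv, hw, hvw, neg_div, Real.arccos_neg]

lemma sgn_sub (n k : ℤ) : sgn (n - k) = (-1) ^ n * sgn k := by
  have h : n + (k - 1) = n - k - 1 + 2 * k := by ring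
  rw [sgn, sgn, ← zpow_add₀ (by norm_num), h, zpow_add₀ (by norm_num), zpow_mul]
  norm_num

lemma vecExt_natCast_of_lt {n : ℕ} (ε : ℝ) (x : Fin n → ℝ) {i : ℕ} (hi : i < n) :
    vecExt ε x i = x ⟨i, hi⟩ := by
  have hi' : (i : ℤ) < n := by exact_mod_cast hi
  simp only [vecExt, dif_pos ((Nat.zero_le i).trans_lt hi),
    Int.ediv_eq_zero_of_lt (Int.natCast_nonneg i) hi', Int.emod_eq_of_lt (Int.natCast_nonneg i) hi',
    zpow_zero, one_mul, Int.toNat_natCast]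

lemma vecExt_natCast_self {n : ℕ} (ε : ℝ) (x : Fin n → ℝ) (hn : 0 < n) :
    vecExt ε x n = ε * x ⟨0, hn⟩ := by
  simp only [vecExt, dif_pos hn, Int.ediv_self (by exact_mod_cast hn.ne' : (n : ℤ) ≠ 0),
    Int.emod_self, zpow_one, Int.toNat_zero]

lemma colExt_natCast_eq_reflectSmul {n : ℕ} {ε ε' : ℝ} (hε' : ε' = (-1) ^ n * ε)
    {A A' : Matrix (Fin 2) (Fin n) ℝ}
    (hA' : ∀ j : Fin n, A' 0 j = (-1) ^ (j : ℕ) * A 0 j ∧ A' 1 j = (-1) ^ (j : ℕ) * -A 1 j)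
    {i : ℕ} (hi : i ≤ n) :
    colExt ε' A' i = reflectSmul ((-1) ^ i) (colExt ε A i) := by
  rcases hi.lt_or_eq with hi | rfl
  · obtain ⟨h0, h1⟩ := hA' ⟨i, hi⟩
    funext r
    fin_cases r <;> simp [colExt, reflectSmul, vecExt_natCast_of_lt _ _ hi, h0, h1]
  · rcases Nat.eq_zero_or_pos i with rfl | hn
    · funext r
      fin_cases r <;> simp [colExt, vecExt, reflectSmul]
    · obtain ⟨h0, h1⟩ := hA' ⟨0, hn⟩
      funext r
      fin_cases r <;> simp [colExt, reflectSmul, vecExt_natCast_self _ _ hn, h0, h1, hε'] <;> ring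

theorem stmt0_general (n k : ℕ)
    (lam : Matrix (Fin 2) (Fin n) ℝ)
    (lam' : Matrix (Fin 2) (Fin n) ℝ)
    (hlam' : ∀ j : Fin n, lam' 0 j = (-1 : ℝ) ^ (j : ℕ) * lam 0 j ∧
      lam' 1 j = (-1 : ℝ) ^ (j : ℕ) * (-(lam 1 j))) :
    (∀ i ∈ Finset.range n,
      brkt (sgn ((n : ℤ) - (k : ℤ))) lam' (i : ℤ) ((i : ℤ) + 1) =
        brkt (sgn (k : ℤ)) lam (i : ℤ) ((i : ℤ) + 1)) ∧
    wind (sgn ((n : ℤ) - (k : ℤ))) lam' = (n : ℝ) * Real.pi - wind (sgn (k : ℤ)) lam := by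
  have hsgn : sgn ((n : ℤ) - k) = (-1) ^ n * sgn k := by rw [sgn_sub, zpow_natCast]
  have hsq (i : ℕ) : (-1 : ℝ) ^ i * (-1) ^ i = 1 := by rw [← mul_pow]; norm_num
  have hcols : ∀ i ∈ range n,
      colExt (sgn ((n : ℤ) - k)) lam' i = reflectSmul ((-1) ^ i) (colExt (sgn k) lam i) ∧
      colExt (sgn ((n : ℤ) - k)) lam' (i + 1) =
        reflectSmul (-(-1) ^ i) (colExt (sgn k) lam (i + 1)) := by
    intro i hi
    have hi := mem_range.mp hi
    have h := colExt_natCast_eq_reflectSmul hsgn hlam' (Nat.succ_le_of_lt hi)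
    push_cast [pow_succ, mul_neg_one] at h
    exact ⟨colExt_natCast_eq_reflectSmul hsgn hlam' hi.le, h⟩
  refine ⟨fun i hi => ?_, ?_⟩
  · rw [brkt, brkt, (hcols i hi).1, (hcols i hi).2, reflectSmul_det, mul_neg, neg_neg, hsq,
      one_mul]
  · rw [wind, wind, sum_congr rfl fun i hi => by
      rw [(hcols i hi).1, (hcols i hi).2, ang2_reflectSmul_neg (hsq i)],
      sum_sub_distrib, sum_const, card_range, nsmul_eq_mul]

/-- Lemma on `alt` and winding: if `λ` has positive consecutive
brackets (with twisted sign `(-1)^(k-1)`), and `λ'` is obtained from `alt(λ)` by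
negating the second row (with twisted sign `(-1)^(n-k-1)`), then the consecutive
brackets agree and `wind(λ') = nπ - wind(λ)`. -/
theorem stmt0 (n k : ℕ) (hn : 1 ≤ n) (hk : k ≤ n)
    (lam : Matrix (Fin 2) (Fin n) ℝ)
    (hpos : ∀ i ∈ Finset.range n, 0 < brkt (sgn (k : ℤ)) lam (i : ℤ) ((i : ℤ) + 1))
    (lam' : Matrix (Fin 2) (Fin n) ℝ)
    (hlam' : ∀ j : Fin n, lam' 0 j = (-1 : ℝ) ^ (j : ℕ) * lam 0 j ∧
      lam' 1 j = (-1 : ℝ) ^ (j : ℕ) * (-(lam 1 j))) :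
    (∀ i ∈ Finset.range n,
      brkt (sgn ((n : ℤ) - (k : ℤ))) lam' (i : ℤ) ((i : ℤ) + 1) =
        brkt (sgn (k : ℤ)) lam (i : ℤ) ((i : ℤ) + 1)) ∧
    wind (sgn ((n : ℤ) - (k : ℤ))) lam' = (n : ℝ) * Real.pi - wind (sgn (k : ℤ)) lam :=
  stmt0_general n k lam lam' hlam'
end

section
/- Let 2 ≤ k ≤ n−2. (i) For every λ ∈ λ⁺_{k,n} there exists an (n−k+2)×n real matrix Λ with alt(Λ) ∈ Gr_{>0}(n−k+2,n) such that the row span of λ is contained in the row span of Λ. (ii) For every λ̃ ∈ λ̃⁺_{k,n} there exists a (k+2)×n real matrix Λ̃ ∈ Gr_{>0}(k+2,n) such that the row span of λ̃ is contained in the row span of Λ̃. -/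
open scoped Matrix

/-! Positive brackets mean that consecutive columns `λ_j → λ_{j+1}` turn counterclockwise by
angles `α_j ∈ (0, π)`, whose sum is the winding. So the columns are `r_i (cos θ_i, sin θ_i)` with
`θ_i = θ_0 + α_0 + ⋯ + α_{i-1}` increasing, and `θ_{n-1} - θ_0 < wind`. For `λ̃` put
`d = k + 1` and `φ_i = θ_i / d`, so that `φ` spreads over less than `π`. By de Moivre, the rows
`r_i cos (d φ_i)` and `r_i sin (d φ_i)` of `λ̃` are combinations of the `d + 1` rows
`r_i sin^j φ_i cos^(d-j) φ_i`, whose maximal minors are homogeneous Vandermonde determinants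
`∏ r · ∏_{a<b} sin (φ_b - φ_a) > 0`. For `λ` the same construction applies to the angles
`i π - θ_i`, with steps `π - α_j` summing to `(n - k + 1) π`; the factor
`cos (i π - x) = (-1)^i cos x` is where `alt` comes from. -/

open Real Finset ComplexConjugate

def vecToComplex (v : Fin 2 → ℝ) : ℂ := ⟨v 0, v 1⟩

lemma ang2_eq_arg {v w : Fin 2 → ℝ} (h : 0 < v 0 * w 1 - v 1 * w 0) :
    ang2 v w = Complex.arg (vecToComplex w * conj (vecToComplex v)) := by
  set z := vecToComplex w * conj (vecToComplex v)
  have hre : z.re = v 0 * w 0 + v 1 * w 1 := by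
    simp only [z, vecToComplex, Complex.mul_re, Complex.conj_re, Complex.conj_im]; ring
  have him : 0 < z.im := by
    simp only [z, vecToComplex, Complex.mul_im, Complex.conj_re, Complex.conj_im]; linarith
  have hnorm : ‖z‖ = √(v 0 ^ 2 + v 1 ^ 2) * √(w 0 ^ 2 + w 1 ^ 2) := by
    rw [norm_mul, Complex.norm_conj, mul_comm]
    simp only [Complex.norm_def, Complex.normSq_mk, vecToComplex]
    ring_nf
  have hz : z ≠ 0 := fun h0 => by simp [h0] at him
  rw [ang2, ← hre, ← hnorm, ← Complex.cos_arg hz,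
    Real.arccos_cos (Complex.arg_nonneg_iff.2 him.le) (Complex.arg_le_pi z)]

lemma ang2_mem_Ioo {v w : Fin 2 → ℝ} (h : 0 < v 0 * w 1 - v 1 * w 0) :
    ang2 v w ∈ Set.Ioo 0 π := by
  have him : 0 < (vecToComplex w * conj (vecToComplex v)).im := by
    simp only [vecToComplex, Complex.mul_im, Complex.conj_re, Complex.conj_im]; linarith
  rw [ang2_eq_arg h]
  refine ⟨(Complex.arg_nonneg_iff.2 him.le).lt_of_ne ?_,
    Complex.arg_lt_pi_iff.2 (Or.inr him.ne')⟩
  intro h0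
  exact him.ne' (Complex.arg_eq_zero_iff.1 h0.symm).2

lemma vecToComplex_ne_zero_of_det_pos {v w : Fin 2 → ℝ} (h : 0 < v 0 * w 1 - v 1 * w 0) :
    vecToComplex v ≠ 0 := fun h0 => by
  have h1 : v 0 = 0 := congrArg Complex.re h0
  have h2 : v 1 = 0 := congrArg Complex.im h0
  simp [h1, h2] at h

lemma vecToComplex_eq_of_ang2 {v w : Fin 2 → ℝ} (h : 0 < v 0 * w 1 - v 1 * w 0) {t : ℝ}
    (hv : vecToComplex v = ‖vecToComplex v‖ * Complex.exp (t * Complex.I)) :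
    vecToComplex w = ‖vecToComplex w‖ * Complex.exp ((t + ang2 v w) * Complex.I) := by
  set u := vecToComplex v
  set z := vecToComplex w * conj u
  have hu : u ≠ 0 := vecToComplex_ne_zero_of_det_pos h
  have hpolar : z * u = vecToComplex w * (‖u‖ ^ 2 : ℝ) := by
    push_cast; rw [← Complex.conj_mul']; ring
  have hnu : ((‖u‖ ^ 2 : ℝ) : ℂ) ≠ 0 := by
    exact_mod_cast pow_ne_zero 2 (norm_ne_zero_iff.2 hu)
  have hz : ‖z‖ = ‖vecToComplex w‖ * ‖u‖ := by rw [norm_mul, Complex.norm_conj]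
  refine mul_right_cancel₀ hnu ?_
  rw [← hpolar, ← Complex.norm_mul_exp_arg_mul_I z, hz, ← ang2_eq_arg h]
  generalize ‖u‖ = a at hv ⊢
  rw [hv, add_mul, Complex.exp_add]
  push_cast
  ring

lemma exists_polar_partialSum (c : ℕ → Fin 2 → ℝ) {m : ℕ}
    (h : ∀ i < m, 0 < c i 0 * c (i + 1) 1 - c i 1 * c (i + 1) 0) :
    ∃ θ₀ : ℝ, ∀ i ≤ m, vecToComplex (c i) = ‖vecToComplex (c i)‖ *
      Complex.exp (↑(θ₀ + ∑ j ∈ range i, ang2 (c j) (c (j + 1))) * Complex.I) := by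
  refine ⟨Complex.arg (vecToComplex (c 0)), fun i hi => ?_⟩
  induction i with
  | zero => simp [Complex.norm_mul_exp_arg_mul_I]
  | succ i ih =>
    rw [sum_range_succ, ← add_assoc, Complex.ofReal_add]
    exact vecToComplex_eq_of_ang2 (h i (by omega)) (ih (by omega))

lemma colExt_natCast {m n : ℕ} (ε : ℝ) (A : Matrix (Fin m) (Fin n) ℝ) (i : Fin n) :
    colExt ε A ((i : ℕ) : ℤ) = fun r => A r i := by
  have hn : 0 < n := i.pos
  ext r
  rw [colExt, vecExt, dif_pos hn]
  have hi : ((i : ℕ) : ℤ) < n := by exact_mod_cast i.isLt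
  have h1 : ((i : ℕ) : ℤ) / n = 0 := Int.ediv_eq_zero_of_lt (by positivity) hi
  have h2 : ((i : ℕ) : ℤ) % n = i := Int.emod_eq_of_lt (by positivity) hi
  simp only [h1, h2, zpow_zero, one_mul, Int.toNat_natCast]

lemma exists_polar_of_brkt_pos {n : ℕ} (ε : ℝ) (A : Matrix (Fin 2) (Fin n) ℝ)
    (hA : ∀ i ∈ range n, 0 < brkt ε A i (i + 1)) :
    ∃ (r : Fin n → ℝ) (θ₀ : ℝ), (∀ i, 0 < r i) ∧ ∀ i : Fin n,
      A 0 i = r i * cos (θ₀ + ∑ j ∈ range i, ang2 (colExt ε A j) (colExt ε A (j + 1))) ∧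
      A 1 i = r i * sin (θ₀ + ∑ j ∈ range i, ang2 (colExt ε A j) (colExt ε A (j + 1))) := by
  set c : ℕ → Fin 2 → ℝ := fun i => colExt ε A i
  have hc : ∀ i < n, 0 < c i 0 * c (i + 1) 1 - c i 1 * c (i + 1) 0 := fun i hi => by
    simpa [c, brkt] using hA i (mem_range.2 hi)
  obtain ⟨θ₀, hθ⟩ := exists_polar_partialSum c hc
  refine ⟨fun i => ‖vecToComplex (c i)‖, θ₀,
    fun i => norm_pos_iff.2 (vecToComplex_ne_zero_of_det_pos (hc i i.isLt)), fun i => ?_⟩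
  have h := hθ i i.isLt.le
  have hci : c i = fun r => A r i := colExt_natCast ε A i
  have hsum : ∑ j ∈ range i, ang2 (c j) (c (j + 1)) =
      ∑ j ∈ range i, ang2 (colExt ε A j) (colExt ε A (j + 1)) := by
    simp only [c, Nat.cast_add_one]
  rw [hsum] at h
  have hre := congrArg Complex.re h
  have him := congrArg Complex.im h
  simp only [Complex.re_ofReal_mul, Complex.im_ofReal_mul, Complex.exp_ofReal_mul_I_re,
    Complex.exp_ofReal_mul_I_im] at hre him
  exact ⟨(congrFun hci 0).symm.trans hre, (congrFun hci 1).symm.trans him⟩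

noncomputable def trigVandermonde {n : ℕ} (d : ℕ) (r φ : Fin n → ℝ) :
    Matrix (Fin (d + 1)) (Fin n) ℝ :=
  .of fun j i => r i * (sin (φ i) ^ (j : ℕ) * cos (φ i) ^ (d - j))

lemma det_trigVandermonde_submatrix {n d : ℕ} (r φ : Fin n → ℝ) (f : Fin (d + 1) → Fin n) :
    ((trigVandermonde d r φ).submatrix id f).det =
      (∏ t, r (f t)) * ∏ a : Fin (d + 1), ∏ b ∈ Ioi a, sin (φ (f b) - φ (f a)) := by
  have hsub : (trigVandermonde d r φ).submatrix id f = (Matrix.of fun t j => r (f t) *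
      Matrix.projVandermonde (fun t => sin (φ (f t))) (fun t => cos (φ (f t))) t j)ᵀ := by
    ext j t
    simp [trigVandermonde, Matrix.projVandermonde_apply, Fin.val_rev]
  rw [hsub, Matrix.det_transpose, Matrix.det_mul_column, Matrix.det_projVandermonde]
  congr 1
  exact prod_congr rfl fun a _ => prod_congr rfl fun b _ => by rw [sin_sub]; ring

lemma posMinors_trigVandermonde {n d : ℕ} {r φ : Fin n → ℝ} (hr : ∀ i, 0 < r i)
    (hφ : ∀ a b, a < b → φ b - φ a ∈ Set.Ioo 0 π) : posMinors (trigVandermonde d r φ) := by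
  intro f hf
  rw [det_trigVandermonde_submatrix]
  refine mul_pos (prod_pos fun t _ => hr _) (prod_pos fun a _ => prod_pos fun b hb => ?_)
  obtain ⟨h0, hπ⟩ := hφ _ _ (hf (mem_Ioi.1 hb))
  exact sin_pos_of_pos_of_lt_pi h0 hπ

lemma re_mul_exp_mem_rowSpan_trigVandermonde {n : ℕ} (d : ℕ) (r φ : Fin n → ℝ) (c : ℂ) :
    (fun i => r i * (c * Complex.exp (↑(d * φ i) * Complex.I)).re) ∈
      rowSpan (trigVandermonde d r φ) := by
  set a : ℕ → ℝ := fun m => (c * Complex.I ^ m).re * d.choose m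
  have hexp : ∀ x : ℝ, (c * Complex.exp (↑(d * x) * Complex.I)).re =
      ∑ m ∈ range (d + 1), a m * (sin x ^ m * cos x ^ (d - m)) := by
    intro x
    rw [Complex.ofReal_mul, Complex.ofReal_natCast, mul_assoc, Complex.exp_nat_mul,
      Complex.exp_mul_I, ← Complex.ofReal_cos, ← Complex.ofReal_sin, add_comm, add_pow, mul_sum,
      Complex.re_sum]
    refine sum_congr rfl fun m _ => ?_
    rw [show c * ((↑(sin x) * Complex.I) ^ m * ↑(cos x) ^ (d - m) * (d.choose m : ℂ)) =
      c * Complex.I ^ m * ↑(sin x ^ m * cos x ^ (d - m) * d.choose m) by push_cast; ring,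
      Complex.re_mul_ofReal]
    ring
  have hvec : (fun i => r i * (c * Complex.exp (↑(d * φ i) * Complex.I)).re) =
      ∑ m : Fin (d + 1), a m • trigVandermonde d r φ m := by
    ext i
    rw [hexp, Finset.sum_apply, mul_sum,
      ← Fin.sum_univ_eq_sum_range (fun m => r i * (a m * _))]
    refine sum_congr rfl fun m _ => ?_
    simp only [trigVandermonde, Pi.smul_apply, Matrix.of_apply, smul_eq_mul]
    ring
  rw [hvec]
  exact Submodule.sum_mem _ fun m _ => Submodule.smul_mem _ _ (Submodule.subset_span ⟨m, rfl⟩)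

lemma rank_eq_of_posMinors {k n : ℕ} {C : Matrix (Fin k) (Fin n) ℝ} (hC : posMinors C)
    (hkn : k ≤ n) : C.rank = k := by
  refine le_antisymm C.rank_le_height ?_
  have hunit : IsUnit (C.submatrix id (Fin.castLE hkn)) :=
    (Matrix.isUnit_iff_isUnit_det _).2 (hC _ (Fin.strictMono_castLE hkn)).ne'.isUnit
  calc k = (C.submatrix id (Fin.castLE hkn)).rank := by
        rw [Matrix.rank_of_isUnit _ hunit, Fintype.card_fin]
    _ ≤ C.rank := C.rank_submatrix_le _ _

lemma sum_Ico_mem_Ioo {s : ℕ → ℝ} {n : ℕ} (hs : ∀ j < n, 0 < s j) {a b : ℕ} (hab : a < b)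
    (hb : b < n) : ∑ j ∈ Ico a b, s j ∈ Set.Ioo 0 (∑ j ∈ range n, s j) := by
  have hpos : ∀ {p q : ℕ}, p < q → q ≤ n → 0 < ∑ j ∈ Ico p q, s j := fun hpq hq =>
    sum_pos (fun j hj => hs j (by simp only [mem_Ico] at hj; omega)) ⟨_, mem_Ico.2 ⟨le_rfl, hpq⟩⟩
  have hrange : 0 ≤ ∑ j ∈ range a, s j := sum_nonneg fun j hj =>
    (hs j (by simp only [mem_range] at hj; omega)).le
  refine ⟨hpos hab hb.le, ?_⟩
  rw [← sum_range_add_sum_Ico s (hab.trans hb).le, ← sum_Ico_consecutive s hab.le hb.le]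
  linarith [hpos hb le_rfl]

lemma exists_grPos_mem_rowSpan_polar {n d : ℕ} (hd : 0 < d) (hdn : d + 1 ≤ n) {r : Fin n → ℝ}
    (hr : ∀ i, 0 < r i) (c : ℝ) {s : ℕ → ℝ} (hs : ∀ j < n, 0 < s j)
    (hsum : ∑ j ∈ range n, s j = d * π) :
    ∃ C : Matrix (Fin (d + 1)) (Fin n) ℝ, GrPos C ∧
      (fun i : Fin n => r i * cos (c + ∑ j ∈ range i, s j)) ∈ rowSpan C ∧
      (fun i : Fin n => r i * sin (c + ∑ j ∈ range i, s j)) ∈ rowSpan C := by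
  set φ : Fin n → ℝ := fun i => (c + ∑ j ∈ range i, s j) / d
  have hdφ : ∀ i, d * φ i = c + ∑ j ∈ range i, s j := fun _ =>
    mul_div_cancel₀ _ (by positivity)
  have hφ : ∀ a b : Fin n, a < b → φ b - φ a ∈ Set.Ioo 0 π := by
    intro a b hab
    have hdiff : φ b - φ a = (∑ j ∈ Ico (a : ℕ) b, s j) / d := by
      rw [sum_Ico_eq_sub _ hab.le]; simp only [φ]; ring
    obtain ⟨h0, h1⟩ := sum_Ico_mem_Ioo hs hab b.isLt
    rw [hsum] at h1
    rw [hdiff]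
    exact ⟨by positivity, by rw [div_lt_iff₀ (by positivity)]; linarith⟩
  have hC := posMinors_trigVandermonde (d := d) hr hφ
  refine ⟨trigVandermonde d r φ, ⟨rank_eq_of_posMinors hC hdn, hC⟩, ?_, ?_⟩
  · have h := re_mul_exp_mem_rowSpan_trigVandermonde d r φ 1
    simpa only [hdφ, one_mul, Complex.exp_ofReal_mul_I_re] using h
  · have h := re_mul_exp_mem_rowSpan_trigVandermonde d r φ (-Complex.I)
    simpa only [hdφ, neg_mul, Complex.neg_re, Complex.I_mul_re, neg_neg,
      Complex.exp_ofReal_mul_I_im] using h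

lemma rowSpan_le_of_mem {n : ℕ} {A : Matrix (Fin 2) (Fin n) ℝ} {S : Submodule ℝ (Fin n → ℝ)}
    (h0 : A 0 ∈ S) (h1 : A 1 ∈ S) : rowSpan A ≤ S :=
  Submodule.span_le.2 <| Set.range_subset_iff.2 <| Fin.forall_fin_two.2 ⟨h0, h1⟩

lemma altM_altM {m n : ℕ} (A : Matrix (Fin m) (Fin n) ℝ) : altM (altM A) = A := by
  ext i j
  simp only [altM, Matrix.of_apply, ← mul_assoc, ← mul_pow, neg_one_mul, neg_neg, one_pow,
    one_mul]

lemma rowSpan_altM {m n : ℕ} (A : Matrix (Fin m) (Fin n) ℝ) :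
    rowSpan (altM A) =
      (rowSpan A).map (LinearMap.mulLeft ℝ fun j : Fin n => (-1 : ℝ) ^ (j : ℕ)) := by
  rw [rowSpan, rowSpan, Submodule.map_span, ← Set.range_comp]
  rfl

theorem exists_grPos_rowSpan_le_of_latPlus {n k : ℕ} (hkn : k + 2 ≤ n)
    {lat : Matrix (Fin 2) (Fin n) ℝ} (h : latPlus n k lat) :
    ∃ Lat : Matrix (Fin (k + 2)) (Fin n) ℝ, GrPos Lat ∧ rowSpan lat ≤ rowSpan Lat := by
  obtain ⟨hbrkt, hwind⟩ := h
  obtain ⟨r, θ₀, hr, hpolar⟩ := exists_polar_of_brkt_pos _ lat hbrkt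
  obtain ⟨C, hC, hcos, hsin⟩ :=
    exists_grPos_mem_rowSpan_polar (d := k + 1) k.succ_pos hkn hr θ₀
    (fun j hj => (ang2_mem_Ioo (hbrkt j (mem_range.2 hj))).1)
    (by push_cast; exact_mod_cast hwind)
  refine ⟨C, hC, rowSpan_le_of_mem ?_ ?_⟩
  · convert hcos using 1
    exact funext fun i => (hpolar i).1
  · convert hsin using 1
    exact funext fun i => (hpolar i).2

theorem exists_altM_grPos_rowSpan_le_of_lamPlus {n k : ℕ} (hk : 2 ≤ k) (hkn : k ≤ n)
    {lam : Matrix (Fin 2) (Fin n) ℝ} (h : lamPlus n k lam) :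
    ∃ Lam : Matrix (Fin (n - k + 2)) (Fin n) ℝ,
      GrPos (altM Lam) ∧ rowSpan lam ≤ rowSpan Lam := by
  obtain ⟨hbrkt, hwind⟩ := h
  obtain ⟨r, θ₀, hr, hpolar⟩ := exists_polar_of_brkt_pos _ lam hbrkt
  set α : ℕ → ℝ := fun j => ang2 (colExt (sgn k) lam j) (colExt (sgn k) lam (j + 1))
  have hsum : ∑ j ∈ range n, (π - α j) = ((n - k + 1 : ℕ) : ℝ) * π := by
    rw [sum_sub_distrib, sum_const, card_range, nsmul_eq_mul]
    have : ∑ j ∈ range n, α j = ((k : ℝ) - 1) * π := by exact_mod_cast hwind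
    rw [this, Nat.cast_add_one, Nat.cast_sub hkn]
    ring
  obtain ⟨C, hC, hcos, hsin⟩ := exists_grPos_mem_rowSpan_polar (n - k).succ_pos (by omega) hr
    (-θ₀) (fun j hj => sub_pos.2 (ang2_mem_Ioo (hbrkt j (mem_range.2 hj))).2) hsum
  have hangle : ∀ i : ℕ,
      θ₀ + ∑ j ∈ range i, α j = i * π - (-θ₀ + ∑ j ∈ range i, (π - α j)) := by
    intro i
    rw [sum_sub_distrib, sum_const, card_range, nsmul_eq_mul]
    ring
  refine ⟨altM C, by rwa [altM_altM], ?_⟩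
  rw [rowSpan_altM]
  refine rowSpan_le_of_mem ?_ ?_
  · convert Submodule.mem_map_of_mem hcos using 1
    ext i
    rw [(hpolar i).1, hangle, cos_nat_mul_pi_sub]
    simp only [LinearMap.mulLeft_apply, Pi.mul_apply]
    ring
  · convert Submodule.mem_map_of_mem (Submodule.neg_mem _ hsin) using 1
    ext i
    rw [(hpolar i).2, hangle, sin_nat_mul_pi_sub]
    simp only [LinearMap.mulLeft_apply, Pi.mul_apply, Pi.neg_apply]
    ring

/-- every `λ ∈ λ⁺_{k,n}` extends to some `Λ` with
`alt(Λ) ∈ Gr_{>0}(n-k+2,n)`, and every `λ̃ ∈ λ̃⁺_{k,n}` extends to some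
`Λ̃ ∈ Gr_{>0}(k+2,n)`. -/
theorem stmt4 (n k : ℕ) (hk2 : 2 ≤ k) (hkn : k + 2 ≤ n) :
    (∀ lam : Matrix (Fin 2) (Fin n) ℝ, lamPlus n (k : ℤ) lam →
      ∃ Lam : Matrix (Fin (n - k + 2)) (Fin n) ℝ,
        GrPos (altM Lam) ∧ rowSpan lam ≤ rowSpan Lam) ∧
    (∀ lat : Matrix (Fin 2) (Fin n) ℝ, latPlus n (k : ℤ) lat →
      ∃ Lat : Matrix (Fin (k + 2)) (Fin n) ℝ,
        GrPos Lat ∧ rowSpan lat ≤ rowSpan Lat) :=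
  ⟨fun _ h => exists_altM_grPos_rowSpan_le_of_lamPlus hk2 (by omega) h,
    fun _ h => exists_grPos_rowSpan_le_of_latPlus hkn h⟩
end

section
/- Let n ≥ 3, let k be an integer, and let λ be a real 2×n matrix with columns extended by λ_{i+n} = (−1)^{k−1}·λ_i, satisfying ⟨i i+1⟩_λ ≠ 0 for all i ∈ {1,…,n} (so λ has rank 2). Then the left kernel of Q_λ, i.e. the set of row vectors x ∈ ℝⁿ with x·Q_λ = 0 (where x is extended by x_{i+n} = (−1)^{k−1}·x_i), is exactly the row span of λ; in particular Q_λ has rank n−2 and, for every real k×n matrix C of rank k whose row span contains the row span of λ, the matrix C·Q_λ has rank k−2. -/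
open scoped Matrix

/-!
The `b`-th entry of `x·Q_λ` is a nonzero multiple of the three-term expression
`x_{b-1}⟨b b+1⟩ + x_b⟨b+1 b-1⟩ + x_{b+1}⟨b-1 b⟩`, which is twisted-periodic in `b`. It vanishes
on the rows of `λ` (the Cramer relation among three vectors of the plane), and since
`⟨m m+1⟩ ≠ 0` its vanishing determines `x_{m+2}` from `x_m` and `x_{m+1}`, so the left kernel of
`Q_λ` has dimension at most two. The rows of `λ` are independent, hence they span the kernel. The
rank statements are then rank–nullity for `x ↦ x·Q_λ`, on all of `ℝⁿ` and on the row span of `C`.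
-/

open Module

theorem sgn_mul_self (k : ℤ) : sgn k * sgn k = 1 := by
  rw [sgn, ← mul_zpow]
  norm_num

theorem Function.Periodic.forall_of_forall_lt {p : ℤ → Prop} {n : ℕ} (hp : Periodic p n)
    (hn : 0 < n) (h : ∀ j : ℕ, j < n → p j) (i : ℤ) : p i := by
  have hn' : (0 : ℤ) < n := by exact_mod_cast hn
  have hmod : i - (i / n : ℤ) * n = i % n := by rw [Int.emod_def, mul_comm]
  have hper := hp.sub_int_mul_eq (x := i) (i / n)
  rw [Int.cast_id, hmod, ← Int.toNat_of_nonneg (Int.emod_nonneg i hn'.ne')] at hper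
  exact hper ▸ h _ (by have := Int.emod_lt_of_pos i hn'; omega)

theorem Submodule.finrank_map_add_finrank_ker_of_le {K V W : Type*} [DivisionRing K]
    [AddCommGroup V] [Module K V] [AddCommGroup W] [Module K W] (f : V →ₗ[K] W)
    {U : Submodule K V} [FiniteDimensional K U] (h : LinearMap.ker f ≤ U) :
    finrank K (U.map f) + finrank K (LinearMap.ker f) = finrank K U := by
  rw [← LinearMap.range_domRestrict, ← (Submodule.comapSubtypeEquivOfLe h).finrank_eq,
    ← LinearMap.ker_domRestrict]
  exact LinearMap.finrank_range_add_finrank_ker _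

section MatrixRank

variable {K : Type*} [Field K] {m n p : Type*} [Fintype m] [Fintype n] [Fintype p]

theorem Matrix.rank_add_finrank_ker_vecMulLinear (Q : Matrix n p K) :
    Q.rank + finrank K (LinearMap.ker Q.vecMulLinear) = Fintype.card n := by
  rw [rank_eq_finrank_span_row, ← range_vecMulLinear, LinearMap.finrank_range_add_finrank_ker,
    finrank_fintype_fun_eq_card]

theorem Matrix.rank_mul_eq_rank_sub_finrank_ker (C : Matrix m n K) (Q : Matrix n p K)
    (hQ : LinearMap.ker Q.vecMulLinear ≤ Submodule.span K (Set.range C.row)) :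
    (C * Q).rank = C.rank - finrank K (LinearMap.ker Q.vecMulLinear) := by
  have hrows : Submodule.span K (Set.range (C * Q).row) =
      (Submodule.span K (Set.range C.row)).map Q.vecMulLinear := by
    rw [Submodule.map_span, ← Set.range_comp]
    rfl
  rw [rank_eq_finrank_span_row, rank_eq_finrank_span_row, hrows,
    ← Submodule.finrank_map_add_finrank_ker_of_le _ hQ, Nat.add_sub_cancel]

end MatrixRank

section TwistedCyclic

variable {n : ℕ} {ε : ℝ}

theorem vecExt_natCast (x : Fin n → ℝ) (j : Fin n) : vecExt ε x (j : ℕ) = x j := by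
  have hj : ((j : ℕ) : ℤ) < n := by exact_mod_cast j.isLt
  simp only [vecExt, dif_pos (by omega : 0 < n), Int.ediv_eq_zero_of_lt (by positivity) hj,
    Int.emod_eq_of_lt (by positivity) hj, zpow_zero, one_mul, Int.toNat_natCast]

theorem vecExt_add_natCast (hε : ε ≠ 0) (x : Fin n → ℝ) (i : ℤ) :
    vecExt ε x (i + n) = ε * vecExt ε x i := by
  unfold vecExt
  split_ifs with hn
  · have hnz : (n : ℤ) ≠ 0 := by exact_mod_cast hn.ne'
    have hq : (i + n) / n = i / n + 1 := by simpa using Int.add_mul_ediv_right i 1 hnz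
    simp only [hq, Int.add_emod_right, zpow_add_one₀ hε]
    ring
  · simp

theorem vecExt_add (x y : Fin n → ℝ) (i : ℤ) :
    vecExt ε (x + y) i = vecExt ε x i + vecExt ε y i := by
  unfold vecExt
  split_ifs <;> simp [mul_add]

theorem vecExt_smul (c : ℝ) (x : Fin n → ℝ) (i : ℤ) :
    vecExt ε (c • x) i = c * vecExt ε x i := by
  unfold vecExt
  split_ifs
  · simp only [Pi.smul_apply, smul_eq_mul]
    ring
  · simp

theorem brkt_add_natCast_add_natCast (hε : ε * ε = 1) (A : Matrix (Fin 2) (Fin n) ℝ) (i j : ℤ) :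
    brkt ε A (i + n) (j + n) = brkt ε A i j := by
  have h : brkt ε A (i + n) (j + n) = ε * ε * brkt ε A i j := by
    simp only [brkt, colExt, vecExt_add_natCast (left_ne_zero_of_mul_eq_one hε)]
    ring
  rw [h, hε, one_mul]

end TwistedCyclic

section Numerator

variable {n : ℕ} {ε : ℝ}

noncomputable def qNumerator (ε : ℝ) (lam : Matrix (Fin 2) (Fin n) ℝ) :
    (Fin n → ℝ) →ₗ[ℝ] ℤ → ℝ where
  toFun x i := vecExt ε x (i - 1) * brkt ε lam i (i + 1)
    + vecExt ε x i * brkt ε lam (i + 1) (i - 1) + vecExt ε x (i + 1) * brkt ε lam (i - 1) i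
  map_add' x y := by
    funext i
    simp only [vecExt_add, Pi.add_apply]
    ring
  map_smul' c x := by
    funext i
    simp only [vecExt_smul, Pi.smul_apply, smul_eq_mul, RingHom.id_apply]
    ring

theorem qNumerator_apply (lam : Matrix (Fin 2) (Fin n) ℝ) (x : Fin n → ℝ) (i : ℤ) :
    qNumerator ε lam x i = vecExt ε x (i - 1) * brkt ε lam i (i + 1)
      + vecExt ε x i * brkt ε lam (i + 1) (i - 1) + vecExt ε x (i + 1) * brkt ε lam (i - 1) i :=
  rfl

theorem qNumerator_add_natCast (hε : ε * ε = 1) (lam : Matrix (Fin 2) (Fin n) ℝ)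
    (x : Fin n → ℝ) (i : ℤ) : qNumerator ε lam x (i + n) = ε * qNumerator ε lam x i := by
  have hε₀ : ε ≠ 0 := left_ne_zero_of_mul_eq_one hε
  simp only [qNumerator_apply, show i + n - 1 = i - 1 + n by ring,
    show i + n + 1 = i + 1 + n by ring, vecExt_add_natCast hε₀, brkt_add_natCast_add_natCast hε]
  ring

theorem qNumerator_row (lam : Matrix (Fin 2) (Fin n) ℝ) (r : Fin 2) :
    qNumerator ε lam (lam r) = 0 := by
  funext i
  simp only [qNumerator_apply, brkt, colExt, Pi.zero_apply]
  fin_cases r <;> simp <;> ring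

theorem rowSpan_le_ker_qNumerator (lam : Matrix (Fin 2) (Fin n) ℝ) :
    rowSpan lam ≤ LinearMap.ker (qNumerator ε lam) :=
  Submodule.span_le.mpr <| Set.range_subset_iff.mpr fun r => qNumerator_row lam r

theorem vecExt_eq_zero_of_qNumerator_eq_zero {lam : Matrix (Fin 2) (Fin n) ℝ}
    (hbr : ∀ m : ℕ, brkt ε lam m (m + 1) ≠ 0) {x : Fin n → ℝ} (hx : qNumerator ε lam x = 0)
    (h₀ : vecExt ε x 0 = 0) (h₁ : vecExt ε x 1 = 0) (m : ℕ) : vecExt ε x m = 0 := by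
  suffices ∀ m : ℕ, vecExt ε x m = 0 ∧ vecExt ε x (m + 1) = 0 from (this m).1
  intro m
  induction m with
  | zero => exact ⟨h₀, h₁⟩
  | succ m ih =>
    refine ⟨by exact_mod_cast ih.2, ?_⟩
    have hm := congrFun hx (m + 1)
    simp only [qNumerator_apply, add_sub_cancel_right, ih.1, ih.2, zero_mul, zero_add,
      Pi.zero_apply] at hm
    push_cast
    exact (mul_eq_zero.mp hm).resolve_right (hbr m)

end Numerator

section Kernel

variable {n : ℕ} {ε : ℝ} {lam : Matrix (Fin 2) (Fin n) ℝ}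

theorem finrank_ker_qNumerator_le (h2 : 2 ≤ n) (hbr : ∀ m : ℕ, brkt ε lam m (m + 1) ≠ 0) :
    finrank ℝ (LinearMap.ker (qNumerator ε lam)) ≤ 2 := by
  set r := LinearMap.funLeft ℝ ℝ (Fin.castLE h2)
  have hinj : Function.Injective (r.domRestrict (LinearMap.ker (qNumerator ε lam))) := by
    refine LinearMap.injective_domRestrict_iff.mpr (Submodule.disjoint_def.mpr fun x hx hr => ?_)
    have hr' (j : Fin 2) : vecExt ε x (j : ℕ) = 0 := by
      rw [← Fin.val_castLE h2, vecExt_natCast]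
      exact congrFun (LinearMap.mem_ker.mp hr) j
    funext j
    rw [← vecExt_natCast (ε := ε) x]
    exact vecExt_eq_zero_of_qNumerator_eq_zero hbr hx (by simpa using hr' 0)
      (by simpa using hr' 1) j
  simpa using LinearMap.finrank_le_finrank_of_injective hinj

theorem finrank_rowSpan_eq_two (h2 : 2 ≤ n) (h01 : brkt ε lam 0 1 ≠ 0) :
    finrank ℝ (rowSpan lam) = 2 := by
  have hdet : (lam.submatrix id (Fin.castLE h2)).det = brkt ε lam 0 1 := by
    have hcol (j : Fin 2) (r : Fin 2) : colExt ε lam (j : ℕ) r = lam r (Fin.castLE h2 j) :=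
      vecExt_natCast (lam r) (Fin.castLE h2 j)
    rw [Matrix.det_fin_two, brkt]
    simp only [Matrix.submatrix_apply, id, ← hcol, Fin.val_zero, Fin.val_one, Nat.cast_zero,
      Nat.cast_one]
    ring
  have hli : LinearIndependent ℝ lam.row :=
    LinearIndependent.of_comp (LinearMap.funLeft ℝ ℝ (Fin.castLE h2))
      (Matrix.linearIndependent_rows_of_det_ne_zero (hdet ▸ h01))
  exact (finrank_span_eq_card hli).trans (Fintype.card_fin 2)

theorem ker_qNumerator_eq_rowSpan (h2 : 2 ≤ n) (hbr : ∀ i : ℤ, brkt ε lam i (i + 1) ≠ 0) :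
    LinearMap.ker (qNumerator ε lam) = rowSpan lam :=
  (Submodule.eq_of_le_of_finrank_le (rowSpan_le_ker_qNumerator lam) <|
    (finrank_ker_qNumerator_le h2 fun m => hbr m).trans
      (finrank_rowSpan_eq_two h2 (by simpa using hbr 0)).ge).symm

end Kernel

theorem ker_vecMulLinear_eq_ker_qNumerator {n : ℕ} {ε : ℝ} {lam : Matrix (Fin 2) (Fin n) ℝ}
    (hε : ε * ε = 1) (hn : 0 < n) (hbr : ∀ i : ℤ, brkt ε lam i (i + 1) ≠ 0)
    {Q : Matrix (Fin n) (Fin n) ℝ} (hQ : IsQmat ε ε lam Q) :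
    LinearMap.ker Q.vecMulLinear = LinearMap.ker (qNumerator ε lam) := by
  ext x
  simp only [LinearMap.mem_ker, Matrix.vecMulLinear_apply]
  have hentry (b : Fin n) : (x ᵥ* Q) b =
      qNumerator ε lam x (b : ℕ) / (brkt ε lam ((b : ℕ) - 1) (b : ℕ) *
        brkt ε lam (b : ℕ) ((b : ℕ) + 1)) :=
    hQ x b
  constructor
  · intro hx
    have hper : Function.Periodic (fun i => qNumerator ε lam x i = 0) n := fun i => by
      simp only [qNumerator_add_natCast hε, mul_eq_zero, left_ne_zero_of_mul_eq_one hε, false_or]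
    funext i
    refine hper.forall_of_forall_lt hn (fun j hj => ?_) i
    have hj := congrFun hx ⟨j, hj⟩
    rw [hentry] at hj
    exact (div_eq_zero_iff.mp hj).resolve_right
      (mul_ne_zero (by simpa using hbr (j - 1)) (hbr j))
  · intro hx
    funext b
    rw [hentry, hx, Pi.zero_apply, zero_div, Pi.zero_apply]

/-- the left kernel of the magic projector `Q_λ` is exactly the
row span of `λ`; in particular `Q_λ` has rank `n - 2` and `C·Q_λ` has rank `k - 2`
for every rank-`k` matrix `C` whose row span contains that of `λ`. -/
theorem stmt6 (n : ℕ) (hn : 3 ≤ n) (k : ℕ)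
    (lam : Matrix (Fin 2) (Fin n) ℝ)
    (hbr : ∀ i ∈ Finset.range n, brkt (sgn (k : ℤ)) lam (i : ℤ) ((i : ℤ) + 1) ≠ 0)
    (Q : Matrix (Fin n) (Fin n) ℝ) (hQ : IsQmat (sgn (k : ℤ)) (sgn (k : ℤ)) lam Q) :
    (∀ x : Fin n → ℝ, Matrix.vecMul x Q = 0 ↔ x ∈ rowSpan lam) ∧
    Q.rank = n - 2 ∧
    (∀ C : Matrix (Fin k) (Fin n) ℝ, C.rank = k → rowSpan lam ≤ rowSpan C →
      (C * Q).rank = k - 2) := by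
  have hε := sgn_mul_self k
  have hbr' : ∀ i : ℤ, brkt (sgn k) lam i (i + 1) ≠ 0 := by
    have hper : Function.Periodic (fun i => brkt (sgn k) lam i (i + 1) ≠ 0) n := fun i => by
      simp only [add_right_comm i (n : ℤ) 1, brkt_add_natCast_add_natCast hε]
    exact hper.forall_of_forall_lt (by omega) fun j hj => hbr j (Finset.mem_range.mpr hj)
  have hker : LinearMap.ker Q.vecMulLinear = rowSpan lam :=
    (ker_vecMulLinear_eq_ker_qNumerator hε (by omega) hbr' hQ).trans
      (ker_qNumerator_eq_rowSpan (by omega) hbr')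
  have hfin : finrank ℝ (rowSpan lam) = 2 :=
    finrank_rowSpan_eq_two (by omega) (by simpa using hbr' 0)
  refine ⟨fun x => by rw [← hker]; rfl, ?_, fun C hC hle => ?_⟩
  · have := Q.rank_add_finrank_ker_vecMulLinear
    rw [hker, hfin, Fintype.card_fin] at this
    omega
  · rw [Matrix.rank_mul_eq_rank_sub_finrank_ker C Q (hker ▸ hle), hC, hker, hfin]
end

section
/- Let 2 ≤ k ≤ n−2, let α := (k−1)π/n ∈ (0,π), and let λ be the 2×n matrix with columns λ_i = (cos(iα), sin(iα))ᵀ for i ∈ {1,…,n} (then λ_{i+n} = (−1)^{k−1}·λ_i and ⟨i i+1⟩_λ = sin(α) > 0). Then Q_λ = −(2cos(α)/sin(α))·1_n + (1/sin(α))·(σ_k + σ_k^{−1}), where 1_n is the n×n identity matrix and σ_k is the n×n matrix of the twisted cyclic shift, i.e. x·σ_k = ((−1)^{k−1}x_n, x_1, …, x_{n−1}) for row vectors x ∈ ℝⁿ. -/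
open scoped Matrix

/-! Extending row vectors twisted-cyclically identifies `ℝⁿ` with the sequences on `ℤ` satisfying
`x_{i+n} = ε x_i`. On these `σ_k` is the shift `x ↦ (x_{i-1})_i` with inverse `x ↦ (x_{i+1})_i`,
so the defining formula of `Q_λ` reads `Q_λ = σ_k D⁻ + diag(t^λ) + σ_k⁻¹ D⁺` with diagonal
matrices `D^∓` of inverse consecutive brackets. Since `nα = (k-1)π`, the columns
`(cos iα, sin iα)` are themselves a twisted-periodic sequence, whence `⟨i j⟩_λ = sin((j-i)α)`:
every consecutive bracket is `sin α` and `t^λ_i = -sin 2α / sin² α = -2 cos α / sin α`. -/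

open Matrix Real

theorem eq_zpow_mul_of_forall_add {K : Type*} [Field K] {f : ℤ → K} {p : ℤ} {ε : K}
    (hε : ε ≠ 0) (hf : ∀ i, f (i + p) = ε * f i) (q r : ℤ) :
    f (p * q + r) = ε ^ q * f r := by
  induction q using Int.induction_on with
  | zero => simp
  | succ q ih =>
    rw [show p * (q + 1) + r = p * q + r + p by ring, hf, ih, ← mul_assoc, ← zpow_one_add₀ hε,
      add_comm]
  | pred q ih =>
    apply mul_left_cancel₀ hε
    rw [← hf, show p * (-q - 1) + r + p = p * -q + r by ring, ih, ← mul_assoc,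
      ← zpow_one_add₀ hε]
    ring_nf

section vecExt

variable {n : ℕ} {ε : ℝ}

theorem exists_eq_mul_add_fin (hn : 0 < n) (i : ℤ) :
    ∃ (q : ℤ) (r : Fin n), i = (n : ℤ) * q + ((r : ℕ) : ℤ) := by
  have hn' : (0 : ℤ) < n := by exact_mod_cast hn
  have h0 := Int.emod_nonneg i hn'.ne'
  have h1 := Int.emod_lt_of_pos i hn'
  refine ⟨i / n, ⟨(i % n).toNat, by omega⟩, ?_⟩
  simp only [Int.toNat_of_nonneg h0]
  exact (Int.mul_ediv_add_emod i n).symm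

theorem vecExt_mul_add (hn : 0 < n) (x : Fin n → ℝ) (q : ℤ) (r : Fin n) :
    vecExt ε x ((n : ℤ) * q + ((r : ℕ) : ℤ)) = ε ^ q * x r := by
  have hn' : (0 : ℤ) < n := by exact_mod_cast hn
  have hr : (0 : ℤ) ≤ r ∧ ((r : ℕ) : ℤ) < n := ⟨by positivity, by exact_mod_cast r.isLt⟩
  have hqr := (Int.ediv_emod_unique (a := n * q + r) (q := q) (r := r) hn').mpr ⟨by ring, hr⟩
  simp only [vecExt, dif_pos hn, hqr.1, hqr.2, Int.toNat_natCast]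

theorem vecExt_fin (x : Fin n → ℝ) (b : Fin n) : vecExt ε x ((b : ℕ) : ℤ) = x b := by
  simpa using vecExt_mul_add (ε := ε) (Fin.pos b) x 0 b

theorem vecExt_add_period (hn : 0 < n) (hε : ε ≠ 0) (x : Fin n → ℝ) (i : ℤ) :
    vecExt ε x (i + n) = ε * vecExt ε x i := by
  obtain ⟨q, r, rfl⟩ := exists_eq_mul_add_fin hn i
  rw [show n * q + r + n = n * (q + 1) + ((r : ℕ) : ℤ) by ring, vecExt_mul_add hn,
    vecExt_mul_add hn, zpow_add_one₀ hε]
  ring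

theorem vecExt_eq_of_forall_add (hn : 0 < n) (hε : ε ≠ 0) {f : ℤ → ℝ}
    (hf : ∀ i, f (i + n) = ε * f i) (i : ℤ) :
    vecExt ε (fun b : Fin n => f ((b : ℕ) : ℤ)) i = f i := by
  obtain ⟨q, r, rfl⟩ := exists_eq_mul_add_fin hn i
  rw [vecExt_mul_add hn, eq_zpow_mul_of_forall_add hε hf]

theorem vecExt_vecExt_add (hn : 0 < n) (hε : ε ≠ 0) (x : Fin n → ℝ) (d i : ℤ) :
    vecExt ε (fun b : Fin n => vecExt ε x (((b : ℕ) : ℤ) + d)) i = vecExt ε x (i + d) :=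
  vecExt_eq_of_forall_add hn hε (f := fun j => vecExt ε x (j + d))
    (fun j => by simp only [add_right_comm j, vecExt_add_period hn hε]) i

theorem vecExt_eq_sum (hn : 0 < n) (x : Fin n → ℝ) (i : ℤ) :
    vecExt ε x i = ∑ a, x a * vecExt ε (Pi.single a 1) i := by
  obtain ⟨q, r, rfl⟩ := exists_eq_mul_add_fin hn i
  simp only [vecExt_mul_add hn, Pi.single_apply, mul_ite, mul_one, mul_zero, Finset.sum_ite_eq,
    Finset.mem_univ, if_true]
  exact mul_comm _ _

end vecExt

section twistShift

variable {n : ℕ} {ε : ℝ}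

noncomputable def twistShift (ε : ℝ) (d : ℤ) : Matrix (Fin n) (Fin n) ℝ :=
  of fun a b => vecExt ε (Pi.single a 1) (((b : ℕ) : ℤ) + d)

theorem vecMul_twistShift (hn : 0 < n) (x : Fin n → ℝ) (d : ℤ) :
    x ᵥ* twistShift ε d = fun b : Fin n => vecExt ε x (((b : ℕ) : ℤ) + d) := by
  funext b
  rw [vecExt_eq_sum hn]
  rfl

theorem twistShift_mul (hn : 0 < n) (hε : ε ≠ 0) (d e : ℤ) :
    twistShift ε d * twistShift ε e = (twistShift ε (d + e) : Matrix (Fin n) (Fin n) ℝ) := by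
  refine ext_iff_vecMul.mpr fun x => ?_
  rw [← vecMul_vecMul]
  simp only [vecMul_twistShift hn, vecExt_vecExt_add hn hε, add_assoc, add_comm e]

theorem twistShift_zero : (twistShift ε 0 : Matrix (Fin n) (Fin n) ℝ) = 1 := by
  refine ext_iff_vecMul.mpr fun x => ?_
  rcases Nat.eq_zero_or_pos n with rfl | hn
  · exact funext (fun b => b.elim0)
  simp only [vecMul_twistShift hn, add_zero, vecExt_fin, vecMul_one]

theorem inv_twistShift (hn : 0 < n) (hε : ε ≠ 0) (d : ℤ) :
    (twistShift ε d : Matrix (Fin n) (Fin n) ℝ)⁻¹ = twistShift ε (-d) :=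
  inv_eq_left_inv (by rw [twistShift_mul hn hε, neg_add_cancel, twistShift_zero])

end twistShift

theorem sgn_ne_zero (k : ℤ) : sgn k ≠ 0 := zpow_ne_zero _ (by norm_num)

theorem sgn_inv (k : ℤ) : (sgn k)⁻¹ = sgn k := by rw [sgn, ← _root_.inv_zpow, inv_neg_one]

theorem sgn_natCast {k : ℕ} (hk : 1 ≤ k) : sgn k = (-1 : ℝ) ^ (k - 1) := by
  rw [sgn, show (k : ℤ) - 1 = ((k - 1 : ℕ) : ℤ) by omega, zpow_natCast]

theorem eq_twistShift_of_vecMul {n : ℕ} (hn : 0 < n) {ε : ℝ} (hε : ε⁻¹ = ε)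
    {S : Matrix (Fin n) (Fin n) ℝ}
    (hS : ∀ (x : Fin n → ℝ) (b : Fin n), (x ᵥ* S) b =
      if (b : ℕ) = 0 then ε * x ⟨n - 1, Nat.sub_lt hn one_pos⟩
      else x ⟨(b : ℕ) - 1, by omega⟩) :
    S = twistShift ε (-1) := by
  refine ext_iff_vecMul.mpr fun x => funext fun b => ?_
  rw [hS, vecMul_twistShift hn]
  dsimp only
  split_ifs with hb
  · have := vecExt_mul_add (ε := ε) hn x (-1) ⟨n - 1, Nat.sub_lt hn one_pos⟩
    rw [_root_.zpow_neg_one, hε] at this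
    rw [← this, hb]
    congr 1
    push_cast
    omega
  · have := vecExt_fin (ε := ε) x ⟨(b : ℕ) - 1, by omega⟩
    rw [← this]
    congr 1
    push_cast
    omega

theorem IsQmat.eq_shift_mul_diagonal {n : ℕ} (hn : 0 < n) {ε : ℝ}
    {lam : Matrix (Fin 2) (Fin n) ℝ} (hlam : ∀ i : ℤ, brkt ε lam i (i + 1) ≠ 0)
    {Q : Matrix (Fin n) (Fin n) ℝ} (hQ : IsQmat ε ε lam Q) :
    Q = twistShift ε (-1) * diagonal (fun b : Fin n => (brkt ε lam ((b : ℕ) - 1) (b : ℕ))⁻¹)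
      + diagonal (fun b : Fin n => tcoef ε lam (b : ℕ))
      + twistShift ε 1 * diagonal (fun b : Fin n => (brkt ε lam (b : ℕ) ((b : ℕ) + 1))⁻¹) := by
  refine ext_iff_vecMul.mpr fun x => funext fun b => ?_
  have hprev := hlam ((b : ℕ) - 1)
  rw [sub_add_cancel] at hprev
  have hnext := hlam (b : ℕ)
  simp only [hQ x b, vecMul_add, ← vecMul_vecMul, vecMul_diagonal, vecMul_twistShift hn,
    Pi.add_apply, vecExt_fin, tcoef, ← sub_eq_add_neg]
  field_simp

theorem IsQmat.eq_of_brkt_eq_sin {n : ℕ} (hn : 0 < n) {ε α : ℝ}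
    {lam : Matrix (Fin 2) (Fin n) ℝ} (hsin : sin α ≠ 0)
    (hbrkt : ∀ i j : ℤ, brkt ε lam i j = sin ((j - i) * α))
    {Q : Matrix (Fin n) (Fin n) ℝ} (hQ : IsQmat ε ε lam Q) :
    Q = (-(2 * cos α / sin α)) • (1 : Matrix (Fin n) (Fin n) ℝ)
      + (sin α)⁻¹ • (twistShift ε (-1) + twistShift ε 1) := by
  have hstep : ∀ i : ℤ, brkt ε lam i (i + 1) = sin α := fun i => by
    rw [hbrkt]; push_cast; ring_nf
  have hstep' : ∀ i : ℤ, brkt ε lam (i - 1) i = sin α := fun i => by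
    simpa only [sub_add_cancel] using hstep (i - 1)
  have htcoef : ∀ i : ℤ, tcoef ε lam i = -(2 * cos α / sin α) := fun i => by
    rw [tcoef, hbrkt, hstep, hstep', show ((i - 1 : ℤ) - (i + 1 : ℤ) : ℝ) * α = -(2 * α) by
      push_cast; ring, sin_neg, sin_two_mul]
    field_simp
  rw [hQ.eq_shift_mul_diagonal hn (fun i => hstep i ▸ hsin)]
  simp only [hstep, hstep', htcoef, ← smul_one_eq_diagonal, Matrix.mul_smul, mul_one]
  module

theorem vecExt_comp_mul_add_one {n : ℕ} (hn : 0 < n) {α : ℝ} {m : ℤ} (hα : n * α = m * π)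
    {g : ℝ → ℝ} (hg : ∀ t, g (t + m * π) = (-1) ^ m * g t) (i : ℤ) :
    vecExt ((-1) ^ m) (fun j : Fin n => g (((j : ℕ) + 1) * α)) i = g ((i + 1) * α) := by
  have hshift : ∀ t : ℤ, ((t + n : ℤ) + 1 : ℝ) * α = ((t : ℝ) + 1) * α + m * π := fun t => by
    push_cast; linear_combination hα
  exact_mod_cast vecExt_eq_of_forall_add (ε := (-1) ^ m) hn (zpow_ne_zero _ (by norm_num))
    (f := fun t : ℤ => g ((t + 1) * α)) (fun t => by simp only [hshift, hg]) i

theorem brkt_eq_sin {n : ℕ} (hn : 0 < n) {α : ℝ} {m : ℤ} (hα : n * α = m * π)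
    {lam : Matrix (Fin 2) (Fin n) ℝ}
    (hlam : ∀ j : Fin n, lam 0 j = cos (((j : ℕ) + 1) * α) ∧ lam 1 j = sin (((j : ℕ) + 1) * α))
    (i j : ℤ) : brkt ((-1) ^ m) lam i j = sin ((j - i) * α) := by
  have hcos : ∀ t : ℤ, colExt ((-1) ^ m) lam t 0 = cos ((t + 1) * α) := fun t =>
    (congrArg (vecExt _ · t) (funext fun b => (hlam b).1)).trans
      (vecExt_comp_mul_add_one hn hα (cos_add_int_mul_pi · m) t)
  have hsin : ∀ t : ℤ, colExt ((-1) ^ m) lam t 1 = sin ((t + 1) * α) := fun t =>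
    (congrArg (vecExt _ · t) (funext fun b => (hlam b).2)).trans
      (vecExt_comp_mul_add_one hn hα (sin_add_int_mul_pi · m) t)
  rw [brkt, hcos, hcos, hsin, hsin,
    show ((j : ℝ) - i) * α = (j + 1) * α - (i + 1) * α by ring, sin_sub]
  ring

theorem sin_mul_pi_div_pos {a b : ℝ} (ha : 0 < a) (hab : a < b) : 0 < sin (a * π / b) := by
  apply sin_pos_of_pos_of_lt_pi
  · exact div_pos (mul_pos ha pi_pos) (ha.trans hab)
  · rw [div_lt_iff₀ (ha.trans hab)]
    nlinarith [pi_pos]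

/-- for the cyclically symmetric `λ` with columns
`λ_i = (cos(iα), sin(iα))`, `α = (k-1)π/n`, the magic projector is
`Q_λ = -(2cos α/sin α)·1 + (1/sin α)(σ_k + σ_k⁻¹)`. -/
theorem stmt9 (n k : ℕ) (hk2 : 2 ≤ k) (hkn : k + 2 ≤ n)
    (α : ℝ) (hα : α = ((k : ℝ) - 1) * Real.pi / n)
    (lam : Matrix (Fin 2) (Fin n) ℝ)
    (hlam : ∀ j : Fin n, lam 0 j = Real.cos (((j : ℕ) + 1) * α) ∧
      lam 1 j = Real.sin (((j : ℕ) + 1) * α))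
    (S : Matrix (Fin n) (Fin n) ℝ)
    (hS : ∀ (x : Fin n → ℝ) (b : Fin n),
      Matrix.vecMul x S b =
        if (b : ℕ) = 0 then (-1 : ℝ) ^ (k - 1) * x ⟨n - 1, by omega⟩
        else x ⟨(b : ℕ) - 1, by have := b.isLt; omega⟩)
    (Q : Matrix (Fin n) (Fin n) ℝ) (hQ : IsQmat (sgn (k : ℤ)) (sgn (k : ℤ)) lam Q) :
    Q = (-(2 * Real.cos α / Real.sin α)) • (1 : Matrix (Fin n) (Fin n) ℝ)
      + (Real.sin α)⁻¹ • (S + S⁻¹) := by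
  have hn : 0 < n := by omega
  have hsin : 0 < sin α := by
    have hk : (2 : ℝ) ≤ k := by exact_mod_cast hk2
    have hkn' : (k : ℝ) + 2 ≤ n := by exact_mod_cast hkn
    exact hα ▸ sin_mul_pi_div_pos (by linarith) (by linarith)
  have hnα : n * α = ((k - 1 : ℤ) : ℝ) * π := by
    rw [hα]
    field_simp
    push_cast
    ring
  have hsgn : sgn k = (-1 : ℝ) ^ (k - 1) := sgn_natCast (by omega)
  have hS' : S = twistShift (sgn k) (-1) :=
    eq_twistShift_of_vecMul hn (sgn_inv k) (by simpa only [← hsgn] using hS)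
  rw [hS', inv_twistShift hn (sgn_ne_zero k), neg_neg]
  exact hQ.eq_of_brkt_eq_sin hn hsin.ne' (brkt_eq_sin hn hnα hlam)
end

section
/- Let i < j be integers and let y_{i+1},…,y_j and ỹ_{i+1},…,ỹ_j be complex numbers. For each s set λ_s := (Re y_s, Im y_s) ∈ ℝ² and λ̃_s := (Re ỹ_s, −Im ỹ_s) ∈ ℝ². Then |Σ_{s=i+1}^{j} y_s·ỹ_s|² − |Σ_{s=i+1}^{j} conj(y_s)·ỹ_s|² = 4·Σ_{i<p<q≤j} det(λ_p, λ_q)·det(λ̃_p, λ̃_q). (Equivalently: the Minkowski square of the sum of the null bispinors P_s = (y_sỹ_s, conj(y_s)ỹ_s) equals four times the corresponding Mandelstam variable; this is the identity 4·Mand_{i,j}(λ,λ̃) = |T(i)−T(j)|² − |O(i)−O(j)|² relating Mandelstam variables to the t-embedding and origami boundary polygons, whose successive differences are y_sỹ_s and conj(y_s)ỹ_s.) -/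
open scoped Matrix

/- The increments `y s * yt s` and `conj (y s) * yt s` have equal moduli, so after expanding
`‖∑ x‖²` into its diagonal and twice the real parts of the ordered cross terms the diagonals
cancel.  With `y, w` taken at `p` and `y', w'` at `q`, the cross term of the difference is
`w̄ w' (ȳ y' - y ȳ')`, and since `ȳ y' - y ȳ'` is
`2i det(λ, λ')`, its real part is `2 det(λ, λ') det(λ̃, λ̃')`. -/

open Finset RCLike
open scoped InnerProductSpace ComplexConjugate

theorem norm_sum_sq_eq_sum_norm_sq_add_two_mul_sum_re_inner {ι 𝕜 E : Type*} [LinearOrder ι]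
    [RCLike 𝕜] [NormedAddCommGroup E] [InnerProductSpace 𝕜 E] (s : Finset ι) (x : ι → E) :
    ‖∑ i ∈ s, x i‖ ^ 2 =
      ∑ i ∈ s, ‖x i‖ ^ 2 + 2 * ∑ p ∈ s, ∑ q ∈ s with p < q, re ⟪x p, x q⟫_𝕜 := by
  induction s using Finset.induction_on_max with
  | empty => simp
  | insert a s ha ih =>
    have haS : a ∉ s := fun h => lt_irrefl a (ha a h)
    have hnone : ∑ q ∈ insert a s with a < q, re ⟪x a, x q⟫_𝕜 = 0 :=
      sum_eq_zero fun q hq => by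
        obtain ⟨hq, haq⟩ := mem_filter.1 hq
        rcases mem_insert.1 hq with rfl | hq
        · exact (lt_irrefl q haq).elim
        · exact ((ha q hq).not_gt haq).elim
    have hnew : ∀ p ∈ s, ∑ q ∈ insert a s with p < q, re ⟪x p, x q⟫_𝕜 =
        re ⟪x p, x a⟫_𝕜 + ∑ q ∈ s with p < q, re ⟪x p, x q⟫_𝕜 := fun p hp => by
      rw [filter_insert, if_pos (ha p hp), sum_insert fun h => haS (mem_filter.1 h).1]
    rw [sum_insert haS, sum_insert haS, sum_insert haS, hnone, sum_congr rfl hnew,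
      add_comm (x a), norm_add_sq (𝕜 := 𝕜), ih, sum_add_distrib, sum_inner, map_sum]
    ring

theorem re_inner_mul_sub_re_inner_conj_mul (y y' w w' : ℂ) :
    re ⟪y * w, y' * w'⟫_ℂ - re ⟪conj y * w, conj y' * w'⟫_ℂ =
      2 * ((y.re * y'.im - y.im * y'.re) * (w.re * -w'.im - -w.im * w'.re)) := by
  simp only [RCLike.inner_apply, RCLike.re_to_complex, Complex.mul_re, Complex.mul_im,
    Complex.conj_re, Complex.conj_im]
  ring

theorem stmt12_general (i j : ℤ) (y yt : ℤ → ℂ) :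
    ‖∑ s ∈ Finset.Ioc i j, y s * yt s‖ ^ 2
      - ‖∑ s ∈ Finset.Ioc i j, (starRingEnd ℂ) (y s) * yt s‖ ^ 2
    = 4 * ∑ p ∈ Finset.Ioc i j, ∑ q ∈ Finset.Ioc p j,
        ((y p).re * (y q).im - (y p).im * (y q).re) *
        ((yt p).re * (-(yt q).im) - (-(yt p).im) * (yt q).re) := by
  have hnorm : ∀ s ∈ Ioc i j, ‖conj (y s) * yt s‖ ^ 2 = ‖y s * yt s‖ ^ 2 := fun s _ => by
    rw [norm_mul, norm_mul, Complex.norm_conj]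
  have hIoc : ∀ p ∈ Ioc i j, Ioc p j = (Ioc i j).filter (p < ·) := fun p hp => by
    ext q
    simp only [mem_Ioc, mem_filter] at hp ⊢
    omega
  rw [norm_sum_sq_eq_sum_norm_sq_add_two_mul_sum_re_inner (𝕜 := ℂ),
    norm_sum_sq_eq_sum_norm_sq_add_two_mul_sum_re_inner (𝕜 := ℂ), sum_congr rfl hnorm,
    add_sub_add_left_eq_sub, ← mul_sub, ← sum_sub_distrib, mul_sum, mul_sum]
  refine sum_congr rfl fun p hp => ?_
  rw [hIoc p hp, ← sum_sub_distrib, mul_sum, mul_sum]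
  refine sum_congr rfl fun q _ => ?_
  rw [re_inner_mul_sub_re_inner_conj_mul]
  ring

/-- the Minkowski square of a sum of null bispinors equals four
times the corresponding Mandelstam variable:
`|Σ y_s ỹ_s|² - |Σ conj(y_s) ỹ_s|² = 4 Σ_{i<p<q≤j} det(λ_p,λ_q)·det(λ̃_p,λ̃_q)`. -/
theorem stmt12 (i j : ℤ) (hij : i < j) (y yt : ℤ → ℂ) :
    ‖∑ s ∈ Finset.Ioc i j, y s * yt s‖ ^ 2
      - ‖∑ s ∈ Finset.Ioc i j, (starRingEnd ℂ) (y s) * yt s‖ ^ 2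
    = 4 * ∑ p ∈ Finset.Ioc i j, ∑ q ∈ Finset.Ioc p j,
        ((y p).re * (y q).im - (y p).im * (y q).re) *
        ((yt p).re * (-(yt q).im) - (-(yt p).im) * (yt q).re) :=
  stmt12_general i j y yt
end

section
/- Let n ≥ 4 and let P_1,…,P_n ∈ ℂ² satisfy: each P_i is null (|P_i^T| = |P_i^O|), P_1 + P_2 + ⋯ + P_n = 0, P_i·P_{i+1} > 0 for all i ∈ {1,…,n} (indices modulo n, so P_{n+1} = P_1), and Σ_{i=1}^{n} arg(P_{i+1}^T / P_i^T) = −2π, where each argument lies in (−π,π) (the T-components are nonzero and no ratio is a negative real, since P_i·P_{i+1} > 0). Then there exists a unique integer k with 2 ≤ k ≤ n−2 for which (P_1,…,P_n) is the null polygon associated with some pair (λ, λ̃) ∈ λλ̃⁺_{k,n}. -/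
open scoped Matrix

/-!
A null vector `(T, O)`, `|T| = |O|`, factors as `(y * conj w, conj y * conj w)` with `y` unique
up to a real factor, and `P · P' = 2 Im (conj y * y') Im (conj w * w')`. Choosing the signs of
the `y_i` one after the other makes every `⟨i i+1⟩_λ` nonnegative (the last one through the
choice of the twist `ε`), and positivity of the Minkowski products then makes all `⟨i i+1⟩_λ`
and `[i i+1]_λ̃` positive; `Σ P_i = 0` is `λ λ̃ᵀ = 0`. A winding is a sum of angles in `(0, π)`
telescoping to `arg ε` modulo `2π`, so `wind λ = mπ` and `wind λ̃ = m̃π` with `(-1)^m = ε` and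
`0 < m, m̃ < n`. Since `arg (T_{i+1} / T_i) = arg (y_{i+1} / y_i) - arg (w_{i+1} / w_i)` exactly,
the `T`-winding `-2π` gives `m̃ = m + 2`, whence `k = m + 1`. Another representation rescales
each `y_i` by a real `r_i`, and positivity of the brackets forces `r_i r_{i+1} > 0`: all angles,
hence `wind λ` and `k`, agree.
-/

open Complex ComplexConjugate Finset
open scoped Real

/-- The paper's `(y ỹ, conj y ỹ)` with `ỹ = conj w`: here `w` is the spinor of `λ̃` read like
that of `λ`, i.e. `λ̃_{1,i} + √-1 λ̃_{2,i}`. -/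
def nullVec (y w : ℂ) : ℂ × ℂ := (y * conj w, conj y * conj w)

lemma minkDot_nullVec (y w y' w' : ℂ) :
    minkDot (nullVec y w) (nullVec y' w') = 2 * (conj y * y').im * (conj w * w').im := by
  simp only [minkDot, nullVec, map_mul, conj_conj, mul_re, mul_im, sub_re, conj_re, conj_im]
  ring

lemma nullVec_real_mul_real_mul {s : ℝ} (hs : s * s = 1) (y w : ℂ) :
    nullVec (s * y) (s * w) = nullVec y w := by
  have hs' : (s : ℂ) * s = 1 := by exact_mod_cast hs
  simp only [nullVec, map_mul, conj_ofReal, Prod.mk.injEq]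
  exact ⟨by linear_combination (y * conj w) * hs', by linear_combination (conj y * conj w) * hs'⟩

lemma exists_spinor {T O : ℂ} (h : ‖T‖ = ‖O‖) : ∃ y : ℂ, y ≠ 0 ∧ conj y * T = O * y := by
  by_cases hTO : T + O = 0
  · exact ⟨I, I_ne_zero, by rw [conj_I]; linear_combination (-I) * hTO⟩
  · refine ⟨T * (conj T + conj O), mul_ne_zero ?_ ?_, ?_⟩
    · rintro rfl
      exact hTO (by rw [zero_add, ← norm_eq_zero, ← h, norm_zero])
    · rwa [← map_add, map_ne_zero]
    · have hnorm : T * conj T = O * conj O := by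
        rw [mul_conj, mul_conj, normSq_eq_norm_sq, normSq_eq_norm_sq, h]
      simp only [map_mul, map_add, conj_conj]
      linear_combination T * hnorm

lemma eq_nullVec_of_spinor {T O y : ℂ} (hy : y ≠ 0) (h : conj y * T = O * y) :
    (T, O) = nullVec y (conj (T / y)) := by
  simp only [nullVec, conj_conj, Prod.mk.injEq]
  constructor <;> field_simp
  linear_combination -h

lemma exists_real_mul_of_nullVec_eq {y w y' w' : ℂ} (h : nullVec y w = nullVec y' w')
    (hy : y ≠ 0) (hw : w ≠ 0) : ∃ r : ℝ, y' = r * y := by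
  simp only [nullVec, Prod.mk.injEq] at h
  have hreal : conj (conj y * y') = conj y * y' := by
    have hw' : conj w ≠ 0 := (map_ne_zero _).2 hw
    apply mul_left_cancel₀ hw'
    simp only [map_mul, conj_conj]
    linear_combination conj y' * h.1 - y' * h.2
  obtain ⟨r, hr⟩ := conj_eq_iff_real.1 hreal
  have hy' : conj y ≠ 0 := (map_ne_zero _).2 hy
  refine ⟨r / normSq y, ?_⟩
  push_cast
  rw [← hr, ← mul_conj]
  field_simp

lemma ne_zero_of_im_conj_mul_pos {z z' : ℂ} (h : 0 < (conj z * z').im) : z ≠ 0 ∧ z' ≠ 0 := by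
  constructor <;> rintro rfl <;> simp at h

lemma arg_div_mem_Ioo {z z' : ℂ} (h : 0 < (conj z * z').im) : arg (z' / z) ∈ Set.Ioo 0 π := by
  have him : 0 < (z' / z).im := by
    rw [div_im, ← sub_div]
    exact div_pos (by simpa [mul_im, mul_comm] using h)
      (normSq_pos.2 (ne_zero_of_im_conj_mul_pos h).1)
  exact ⟨(arg_nonneg_iff.2 him.le).lt_of_ne fun h0 => him.ne' (arg_eq_zero_iff.1 h0.symm).2,
    arg_lt_pi_iff.2 (Or.inr him.ne')⟩

lemma arg_mul_conj_div {y y' w w' : ℂ} (hy : arg (y' / y) ∈ Set.Ioo 0 π)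
    (hw : arg (w' / w) ∈ Set.Ioo 0 π) :
    arg (y' * conj w' / (y * conj w)) = arg (y' / y) - arg (w' / w) := by
  have hy0 : y' / y ≠ 0 := fun h => by simp [h] at hy
  have hw0 : conj (w' / w) ≠ 0 := (map_ne_zero _).2 fun h => by simp [h] at hw
  have hconj : arg (conj (w' / w)) = -arg (w' / w) := by rw [arg_conj, if_neg hw.2.ne]
  have hmem : arg (y' / y) + arg (conj (w' / w)) ∈ Set.Ioc (-π) π := by
    rw [hconj]
    constructor <;> linarith [hy.1, hy.2, hw.1, hw.2]
  rw [show y' * conj w' / (y * conj w) = y' / y * conj (w' / w) by rw [map_div₀]; ring,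
    arg_mul hy0 hw0 hmem, hconj, sub_eq_add_neg]

lemma arg_div_eq_of_nullVec_eq {y₁ w₁ y₂ w₂ y₁' w₁' y₂' w₂' : ℂ}
    (h₁ : nullVec y₁ w₁ = nullVec y₁' w₁') (h₂ : nullVec y₂ w₂ = nullVec y₂' w₂')
    (hy : 0 < (conj y₁ * y₂).im) (hw : 0 < (conj w₁ * w₂).im) (hy' : 0 < (conj y₁' * y₂').im) :
    arg (y₂' / y₁') = arg (y₂ / y₁) := by
  obtain ⟨hy₁, hy₂⟩ := ne_zero_of_im_conj_mul_pos hy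
  obtain ⟨hw₁, hw₂⟩ := ne_zero_of_im_conj_mul_pos hw
  obtain ⟨r₁, rfl⟩ := exists_real_mul_of_nullVec_eq h₁ hy₁ hw₁
  obtain ⟨r₂, rfl⟩ := exists_real_mul_of_nullVec_eq h₂ hy₂ hw₂
  have hr : 0 < r₁ * r₂ := by
    have him : (conj (r₁ * y₁) * (r₂ * y₂)).im = r₁ * r₂ * (conj y₁ * y₂).im := by
      simp only [map_mul, conj_ofReal, mul_im, mul_re, ofReal_re, ofReal_im, conj_re, conj_im]
      ring
    rw [him] at hy'
    exact pos_of_mul_pos_left hy' hy.le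
  have hr₁ : r₁ ≠ 0 := by rintro rfl; simp at hr
  rw [show (r₂ : ℂ) * y₂ / (r₁ * y₁) = ((r₂ / r₁ : ℝ) : ℂ) * (y₂ / y₁) by push_cast; field_simp,
    arg_real_mul _ (div_pos_iff.2 ((mul_pos_iff.1 hr).imp And.symm And.symm))]

lemma exists_int_mul_pi_of_coe_eq_arg {x ε : ℝ} (hε : ε = 1 ∨ ε = -1)
    (h : (x : Real.Angle) = arg ε) : ∃ m : ℤ, x = m * π ∧ (-1 : ℝ) ^ m = ε := by
  rcases hε with rfl | rfl
  · obtain ⟨t, ht⟩ :=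
      Real.Angle.angle_eq_iff_two_pi_dvd_sub.1 (h.trans (by rw [ofReal_one, arg_one]))
    exact ⟨2 * t, by push_cast; linarith, by rw [zpow_mul]; norm_num⟩
  · obtain ⟨t, ht⟩ := Real.Angle.angle_eq_iff_two_pi_dvd_sub.1
      (h.trans (by rw [ofReal_neg, ofReal_one, arg_neg_one]))
    exact ⟨2 * t + 1, by push_cast; linarith,
      by rw [zpow_add₀ (by norm_num), zpow_mul]; norm_num⟩

lemma sum_arg_div_coe_angle (c : ℤ → ℂ) (m : ℕ) (hc : ∀ i : ℕ, i ≤ m → c i ≠ 0) :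
    ((∑ i ∈ range m, arg (c (i + 1) / c i) : ℝ) : Real.Angle) = arg (c m / c 0) := by
  induction m with
  | zero => simp
  | succ m ih =>
    have h₀ : c 0 ≠ 0 := by exact_mod_cast hc 0 (Nat.zero_le _)
    have hm := hc m m.le_succ
    have hm₁ : c (m + 1) ≠ 0 := by exact_mod_cast hc (m + 1) le_rfl
    rw [sum_range_succ, Real.Angle.coe_add, ih fun i hi => hc i (hi.trans m.le_succ),
      Nat.cast_succ, arg_div_coe_angle hm h₀, arg_div_coe_angle hm₁ hm, arg_div_coe_angle hm₁ h₀]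
    abel

lemma exists_forall_im_conj_mul_nonneg (z : ℕ → ℂ) :
    ∃ Y : ℕ → ℂ, (∀ j, Y j = z j ∨ Y j = -z j) ∧ ∀ j, 0 ≤ (conj (Y j) * Y (j + 1)).im := by
  let Y : ℕ → ℂ := fun j => Nat.rec (z 0)
    (fun j Yj => if 0 ≤ (conj Yj * z (j + 1)).im then z (j + 1) else -z (j + 1)) j
  refine ⟨Y, fun j => ?_, fun j => ?_⟩
  · cases j with
    | zero => exact Or.inl rfl
    | succ j =>
      change (if _ then _ else _) = _ ∨ (if _ then _ else _) = _
      split_ifs <;> simp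
  · change 0 ≤ (conj (Y j) * if 0 ≤ (conj (Y j) * z (j + 1)).im then z (j + 1) else -z (j + 1)).im
    split_ifs with h
    · exact h
    · simp only [mul_neg, neg_im]
      linarith

lemma sgn_natCast_add_one (m : ℕ) : sgn ((m + 1 : ℕ) : ℤ) = (-1) ^ (m : ℤ) := by
  simp [sgn]

lemma sgn_eq_one_or_neg_one (k : ℤ) : sgn k = 1 ∨ sgn k = -1 :=
  (k - 1).even_or_odd.imp Even.neg_one_zpow Odd.neg_one_zpow

section Spinors

variable {n : ℕ}

def spinor (A : Matrix (Fin 2) (Fin n) ℝ) (j : Fin n) : ℂ := A 0 j + A 1 j * I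

noncomputable def extSpinor (ε : ℝ) (A : Matrix (Fin 2) (Fin n) ℝ) (i : ℤ) : ℂ :=
  ⟨colExt ε A i 0, colExt ε A i 1⟩

def ofSpinors (y : Fin n → ℂ) : Matrix (Fin 2) (Fin n) ℝ :=
  Matrix.of ![fun j => (y j).re, fun j => (y j).im]

lemma spinor_ofSpinors (y : Fin n → ℂ) (j : Fin n) : spinor (ofSpinors y) j = y j := by
  simp [spinor, ofSpinors, re_add_im]

lemma nullVec_spinor (lam lat : Matrix (Fin 2) (Fin n) ℝ) (j : Fin n) :
    nullVec (spinor lam j) (spinor lat j) =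
      ((lam 0 j + lam 1 j * I) * (lat 0 j - lat 1 j * I),
        conj (lam 0 j + lam 1 j * I) * (lat 0 j - lat 1 j * I)) := by
  simp [nullVec, spinor, sub_eq_add_neg]

lemma brkt_eq_im (ε : ℝ) (A : Matrix (Fin 2) (Fin n) ℝ) (i j : ℤ) :
    brkt ε A i j = (conj (extSpinor ε A i) * extSpinor ε A j).im := by
  simp only [brkt, extSpinor, mul_im, conj_re, conj_im]
  ring

lemma extSpinor_natCast (ε : ℝ) (A : Matrix (Fin 2) (Fin n) ℝ) {j : ℕ} (hj : j < n) :
    extSpinor ε A j = spinor A ⟨j, hj⟩ := by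
  have hq : (j : ℤ) / n = 0 := Int.ediv_eq_zero_of_lt (by positivity) (by exact_mod_cast hj)
  have hr : (j : ℤ) % n = j := Int.emod_eq_of_lt (by positivity) (by exact_mod_cast hj)
  simp [extSpinor, spinor, colExt, vecExt, (Nat.zero_le j).trans_lt hj, hq, hr, mk_eq_add_mul_I]

lemma extSpinor_self (ε : ℝ) (A : Matrix (Fin 2) (Fin n) ℝ) (hn : 0 < n) :
    extSpinor ε A n = ε * spinor A ⟨0, hn⟩ := by
  have hn' : (n : ℤ) ≠ 0 := by exact_mod_cast hn.ne'
  apply Complex.ext <;> simp [extSpinor, spinor, colExt, vecExt, hn, Int.ediv_self hn']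

lemma brkt_ofSpinors_nonneg (hn : 0 < n) {Y : ℕ → ℂ}
    (hY : ∀ j, 0 ≤ (conj (Y j) * Y (j + 1)).im) {ε : ℝ}
    (hε : 0 ≤ ε * (conj (Y (n - 1)) * Y 0).im) {i : ℕ} (hi : i < n) :
    0 ≤ brkt ε (ofSpinors fun j : Fin n => Y j) i (i + 1) := by
  rw [brkt_eq_im, extSpinor_natCast ε _ hi, spinor_ofSpinors]
  rcases (Nat.succ_le_of_lt hi).lt_or_eq with hi₁ | hi₁
  · rw [show (i : ℤ) + 1 = (i + 1 : ℕ) by push_cast; ring, extSpinor_natCast ε _ hi₁,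
      spinor_ofSpinors]
    exact hY i
  · obtain rfl : i = n - 1 := by omega
    rwa [show ((n - 1 : ℕ) : ℤ) + 1 = n by omega, extSpinor_self ε _ hn, spinor_ofSpinors,
      mul_comm (ε : ℂ), ← mul_assoc, im_mul_ofReal, mul_comm]

lemma ang2_eq_arg_div (v w : Fin 2 → ℝ) (h : 0 < (conj ⟨v 0, v 1⟩ * ⟨w 0, w 1⟩ : ℂ).im) :
    ang2 v w = arg (⟨w 0, w 1⟩ / ⟨v 0, v 1⟩) := by
  obtain ⟨hv, hw⟩ := ne_zero_of_im_conj_mul_pos h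
  have hnorm (u : Fin 2 → ℝ) : √(u 0 ^ 2 + u 1 ^ 2) = ‖(⟨u 0, u 1⟩ : ℂ)‖ := by
    rw [norm_def, normSq_mk, sq, sq]
  have hang : ang2 v w = InnerProductGeometry.angle (⟨v 0, v 1⟩ : ℂ) ⟨w 0, w 1⟩ := by
    rw [ang2, InnerProductGeometry.angle, Complex.inner, hnorm, hnorm]
    congr 2
    simp only [mul_re, conj_re, conj_im]
    ring
  rw [hang, InnerProductGeometry.angle_comm, angle_eq_abs_arg hw hv,
    abs_of_pos (arg_div_mem_Ioo h).1]

lemma wind_eq_sum_arg {ε : ℝ} {A : Matrix (Fin 2) (Fin n) ℝ}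
    (h : ∀ i ∈ range n, 0 < brkt ε A i (i + 1)) :
    wind ε A = ∑ i ∈ range n, arg (extSpinor ε A (i + 1) / extSpinor ε A i) :=
  sum_congr rfl fun i hi => ang2_eq_arg_div _ _ ((h i hi).trans_eq (brkt_eq_im ε A _ _))

lemma wind_eq_int_mul_pi (hn : 0 < n) {ε : ℝ} (hε : ε = 1 ∨ ε = -1)
    {A : Matrix (Fin 2) (Fin n) ℝ} (h : ∀ i ∈ range n, 0 < brkt ε A i (i + 1)) :
    ∃ m : ℤ, 0 < m ∧ m < n ∧ wind ε A = m * π ∧ (-1 : ℝ) ^ m = ε := by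
  have harg (i : ℕ) (hi : i ∈ range n) :=
    arg_div_mem_Ioo ((h i hi).trans_eq (brkt_eq_im ε A _ _))
  have hne (i : ℕ) (hi : i ≤ n) : extSpinor ε A i ≠ 0 := by
    rcases hi.lt_or_eq with hi | rfl
    · exact (ne_zero_of_im_conj_mul_pos ((h i (mem_range.2 hi)).trans_eq (brkt_eq_im ε A _ _))).1
    · have := (ne_zero_of_im_conj_mul_pos
        ((h (i - 1) (mem_range.2 (by omega))).trans_eq (brkt_eq_im ε A _ _))).2
      rwa [show ((i - 1 : ℕ) : ℤ) + 1 = i by omega] at this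
  have hangle : ((wind ε A : ℝ) : Real.Angle) = arg ε := by
    have h₀ : extSpinor ε A 0 = spinor A ⟨0, hn⟩ := by exact_mod_cast extSpinor_natCast ε A hn
    have h₀' : extSpinor ε A 0 ≠ 0 := by exact_mod_cast hne 0 (Nat.zero_le _)
    rw [wind_eq_sum_arg h, sum_arg_div_coe_angle _ n hne, extSpinor_self ε A hn, ← h₀,
      mul_div_cancel_right₀ _ h₀']
  obtain ⟨m, hm, hmε⟩ := exists_int_mul_pi_of_coe_eq_arg hε hangle
  have hpos : 0 < wind ε A := by
    rw [wind_eq_sum_arg h]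
    exact sum_pos (fun i hi => (harg i hi).1) ⟨0, mem_range.2 hn⟩
  have hlt : wind ε A < n * π := by
    rw [wind_eq_sum_arg h]
    calc _ < ∑ _i ∈ range n, π :=
          sum_lt_sum_of_nonempty ⟨0, mem_range.2 hn⟩ fun i hi => (harg i hi).2
      _ = n * π := by simp
  refine ⟨m, ?_, ?_, hm, hmε⟩
  · exact_mod_cast (pos_of_mul_pos_left (hm ▸ hpos) Real.pi_pos.le : (0 : ℝ) < m)
  · exact_mod_cast (lt_of_mul_lt_mul_right (hm ▸ hlt) Real.pi_pos.le : (m : ℝ) < n)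

end Spinors

section Polygon

variable {n : ℕ} {P : ℤ → ℂ × ℂ} {ε : ℝ} {lam lat : Matrix (Fin 2) (Fin n) ℝ}

lemma eq_nullVec_extSpinor (hn : 0 < n) (hε : ε = 1 ∨ ε = -1)
    (hper : ∀ i : ℤ, P (i + n) = P i)
    (hP : ∀ j : Fin n, P j = nullVec (spinor lam j) (spinor lat j)) (i : ℕ) (hi : i ≤ n) :
    P i = nullVec (extSpinor ε lam i) (extSpinor ε lat i) := by
  rcases hi.lt_or_eq with hi | rfl
  · rw [extSpinor_natCast ε lam hi, extSpinor_natCast ε lat hi]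
    exact hP ⟨i, hi⟩
  · have hεε : ε * ε = 1 := by rcases hε with rfl | rfl <;> norm_num
    rw [extSpinor_self ε lam hn, extSpinor_self ε lat hn, nullVec_real_mul_real_mul hεε,
      ← hP ⟨0, hn⟩]
    simpa using hper 0

lemma minkDot_eq_brkt_mul_brkt
    (hrep : ∀ i : ℕ, i ≤ n → P i = nullVec (extSpinor ε lam i) (extSpinor ε lat i))
    {i : ℕ} (hi : i < n) :
    minkDot (P i) (P (i + 1)) = 2 * brkt ε lam i (i + 1) * brkt ε lat i (i + 1) := by
  have h₁ := hrep (i + 1) hi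
  push_cast at h₁
  rw [hrep i hi.le, h₁, minkDot_nullVec, brkt_eq_im, brkt_eq_im]

lemma sum_arg_fst_eq_wind_sub_wind
    (hrep : ∀ i : ℕ, i ≤ n → P i = nullVec (extSpinor ε lam i) (extSpinor ε lat i))
    (hlam : ∀ i ∈ range n, 0 < brkt ε lam i (i + 1))
    (hlat : ∀ i ∈ range n, 0 < brkt ε lat i (i + 1)) :
    ∑ i ∈ range n, arg ((P (i + 1)).1 / (P i).1) = wind ε lam - wind ε lat := by
  rw [wind_eq_sum_arg hlam, wind_eq_sum_arg hlat, ← sum_sub_distrib]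
  refine sum_congr rfl fun i hi => ?_
  have h₁ := hrep (i + 1) (mem_range.1 hi)
  push_cast at h₁
  rw [hrep i (mem_range.1 hi).le, h₁]
  exact arg_mul_conj_div (arg_div_mem_Ioo ((hlam i hi).trans_eq (brkt_eq_im ε lam _ _)))
    (arg_div_mem_Ioo ((hlat i hi).trans_eq (brkt_eq_im ε lat _ _)))

lemma mul_transpose_eq_zero_of_sum_eq_zero
    (hP : ∀ j : Fin n, P j = nullVec (spinor lam j) (spinor lat j))
    (hsum : ∑ i ∈ range n, P i = 0) : lam * latᵀ = 0 := by
  set y := spinor lam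
  set w := spinor lat
  have hsum' : ∑ j, nullVec (y j) (w j) = 0 := by
    simpa [← hP] using (Finset.sum_range fun i => P i).symm.trans hsum
  have h₁ : ∑ j, y j * w j = 0 := by
    simpa [nullVec, Prod.snd_sum] using congrArg (fun p => conj p.2) hsum'
  have h₂ : ∑ j, conj (y j) * w j = 0 := by
    simpa [nullVec, Prod.fst_sum] using congrArg (fun p => conj p.1) hsum'
  have hre : ∑ j, (lam 0 j : ℂ) * w j = 0 := by
    have h (j : Fin n) : (lam 0 j : ℂ) = (y j + conj (y j)) / 2 := by
      rw [← re_eq_add_conj]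
      simp [y, spinor]
    simp_rw [h, div_mul_eq_mul_div, ← sum_div, add_mul, sum_add_distrib, h₁, h₂]
    simp
  have him : ∑ j, (lam 1 j : ℂ) * w j = 0 := by
    have h (j : Fin n) : (lam 1 j : ℂ) = (y j - conj (y j)) / (2 * I) := by
      rw [← im_eq_sub_conj]
      simp [y, spinor]
    simp_rw [h, div_mul_eq_mul_div, ← sum_div, sub_mul, sum_sub_distrib, h₁, h₂]
    simp
  ext r s
  fin_cases r <;> fin_cases s
  · simpa [Matrix.mul_apply, w, spinor] using congrArg re hre
  · simpa [Matrix.mul_apply, w, spinor] using congrArg im hre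
  · simpa [Matrix.mul_apply, w, spinor] using congrArg re him
  · simpa [Matrix.mul_apply, w, spinor] using congrArg im him

lemma exists_spinor_matrices (hn : 0 < n)
    (hper : ∀ i : ℤ, P (i + n) = P i) (hnull : ∀ i : ℤ, ‖(P i).1‖ = ‖(P i).2‖)
    (hpos : ∀ i ∈ range n, 0 < minkDot (P i) (P (i + 1))) :
    ∃ ε : ℝ, (ε = 1 ∨ ε = -1) ∧ ∃ lam lat : Matrix (Fin 2) (Fin n) ℝ,
      (∀ i ∈ range n, 0 < brkt ε lam i (i + 1)) ∧ (∀ i ∈ range n, 0 < brkt ε lat i (i + 1)) ∧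
      ∀ j : Fin n, P j = nullVec (spinor lam j) (spinor lat j) := by
  choose y hy0 hy using fun i : ℕ => exists_spinor (hnull i)
  obtain ⟨Y, hYy, hY⟩ := exists_forall_im_conj_mul_nonneg y
  have hY0 (j : ℕ) : Y j ≠ 0 := by rcases hYy j with h | h <;> simp [h, hy0 j]
  have hYspin (j : ℕ) : conj (Y j) * (P j).1 = (P j).2 * Y j := by
    rcases hYy j with h | h <;> rw [h]
    · exact hy j
    · rw [map_neg]; linear_combination -hy j
  -- `λ_n = ε λ_0`, so `ε` is the sign making the closing bracket `⟨n-1, n⟩` nonnegative.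
  let ε : ℝ := if 0 ≤ (conj (Y (n - 1)) * Y 0).im then 1 else -1
  have hε : ε = 1 ∨ ε = -1 := by unfold ε; split_ifs <;> simp
  let lam := ofSpinors fun j : Fin n => Y j
  let lat := ofSpinors fun j : Fin n => conj ((P j).1 / Y j)
  have hP (j : Fin n) : P j = nullVec (spinor lam j) (spinor lat j) := by
    simp only [lam, lat, spinor_ofSpinors]
    exact eq_nullVec_of_spinor (hY0 j) (hYspin j)
  have hlam (i : ℕ) (hi : i < n) : 0 ≤ brkt ε lam i (i + 1) :=
    brkt_ofSpinors_nonneg hn hY (by unfold ε; split_ifs with h <;> linarith) hi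
  have hrep := eq_nullVec_extSpinor hn hε hper hP
  have hboth (i : ℕ) (hi : i ∈ range n) : 0 < brkt ε lam i (i + 1) ∧ 0 < brkt ε lat i (i + 1) := by
    have h := hpos i hi
    rw [minkDot_eq_brkt_mul_brkt hrep (mem_range.1 hi), mul_assoc] at h
    have hlat := pos_of_mul_pos_right (pos_of_mul_pos_right h zero_le_two)
      (hlam i (mem_range.1 hi))
    exact ⟨pos_of_mul_pos_left (pos_of_mul_pos_right h zero_le_two) hlat.le, hlat⟩
  exact ⟨ε, hε, lam, lat, fun i hi => (hboth i hi).1, fun i hi => (hboth i hi).2, hP⟩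

lemma wind_eq_wind_of_nullVec_eq {ε' : ℝ} {lam' lat' : Matrix (Fin 2) (Fin n) ℝ}
    (h : ∀ i : ℕ, i ≤ n → nullVec (extSpinor ε lam i) (extSpinor ε lat i) =
      nullVec (extSpinor ε' lam' i) (extSpinor ε' lat' i))
    (hlam : ∀ i ∈ range n, 0 < brkt ε lam i (i + 1))
    (hlat : ∀ i ∈ range n, 0 < brkt ε lat i (i + 1))
    (hlam' : ∀ i ∈ range n, 0 < brkt ε' lam' i (i + 1)) :
    wind ε lam = wind ε' lam' := by
  rw [wind_eq_sum_arg hlam, wind_eq_sum_arg hlam']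
  refine sum_congr rfl fun i hi => ?_
  have h₁ := h (i + 1) (mem_range.1 hi)
  push_cast at h₁
  exact (arg_div_eq_of_nullVec_eq (h i (mem_range.1 hi).le) h₁
    ((hlam i hi).trans_eq (brkt_eq_im _ _ _ _)) ((hlat i hi).trans_eq (brkt_eq_im _ _ _ _))
    ((hlam' i hi).trans_eq (brkt_eq_im _ _ _ _))).symm

end Polygon

/-- a null polygon with positive consecutive Minkowski products
and total winding `-2π` of its `T`-components is the null polygon associated with
some `(λ, λ̃) ∈ λλ̃⁺_{k,n}` for a unique `k` with `2 ≤ k ≤ n-2`. -/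
theorem stmt13 (n : ℕ) (hn : 4 ≤ n) (P : ℤ → ℂ × ℂ)
    (hper : ∀ i : ℤ, P (i + n) = P i)
    (hnull : ∀ i : ℤ, ‖(P i).1‖ = ‖(P i).2‖)
    (hsum : ∑ i ∈ Finset.range n, P (i : ℤ) = 0)
    (hpos : ∀ i ∈ Finset.range n, 0 < minkDot (P (i : ℤ)) (P ((i : ℤ) + 1)))
    (hwind : ∑ i ∈ Finset.range n, Complex.arg ((P ((i : ℤ) + 1)).1 / (P (i : ℤ)).1)
      = -(2 * Real.pi)) :
    ∃! k : ℕ, 2 ≤ k ∧ k ≤ n - 2 ∧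
      ∃ lam lat : Matrix (Fin 2) (Fin n) ℝ, lamlatPlus n (k : ℤ) lam lat ∧
        ∀ j : Fin n, P ((j : ℕ) : ℤ) =
          ((lam 0 j + lam 1 j * Complex.I) * (lat 0 j - lat 1 j * Complex.I),
            (starRingEnd ℂ) (lam 0 j + lam 1 j * Complex.I) *
              (lat 0 j - lat 1 j * Complex.I)) := by
  have hn0 : 0 < n := by omega
  obtain ⟨ε, hε, lam, lat, hlam, hlat, hP⟩ := exists_spinor_matrices hn0 hper hnull hpos
  have hrep := eq_nullVec_extSpinor hn0 hε hper hP
  obtain ⟨m, hm0, -, hwlam, hmε⟩ := wind_eq_int_mul_pi hn0 hε hlam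
  obtain ⟨m', -, hm'n, hwlat, -⟩ := wind_eq_int_mul_pi hn0 hε hlat
  have hm' : m' = m + 2 := by
    have h := (sum_arg_fst_eq_wind_sub_wind hrep hlam hlat).symm.trans hwind
    rw [hwlam, hwlat] at h
    exact_mod_cast (by nlinarith [Real.pi_pos] : (m' : ℝ) = m + 2)
  lift m to ℕ using hm0.le
  have hsgn : sgn ((m + 1 : ℕ) : ℤ) = ε := by rw [sgn_natCast_add_one, hmε]
  refine ⟨m + 1, ⟨by omega, by omega, lam, lat,
    ⟨⟨hsgn ▸ hlam, by rw [hsgn, hwlam]; push_cast; ring⟩,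
      ⟨hsgn ▸ hlat, by rw [hsgn, hwlat, hm']; push_cast; ring⟩,
      mul_transpose_eq_zero_of_sum_eq_zero hP hsum⟩,
    fun j => (hP j).trans (nullVec_spinor lam lat j)⟩, ?_⟩
  rintro k ⟨-, -, lam', lat', ⟨⟨hlam', hwk⟩, -, -⟩, hP'⟩
  have hrep' := eq_nullVec_extSpinor hn0 (sgn_eq_one_or_neg_one k) hper
    fun j => (hP' j).trans (nullVec_spinor lam' lat' j).symm
  have h := wind_eq_wind_of_nullVec_eq (fun i hi => (hrep i hi).symm.trans (hrep' i hi))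
    hlam hlat hlam'
  rw [hwlam, hwk] at h
  push_cast at h
  exact_mod_cast (by nlinarith [Real.pi_pos] : (k : ℝ) = m + 1)
end

section
/- Let Σ be a simple undirected graph with vertex set V and let T, O : V → ℂ be maps such that: (i) T(u) ≠ T(v) for every edge {u,v} of Σ; (ii) for all distinct vertices u, v one has |T(u) − T(v)| ≥ |O(u) − O(v)|, with equality if and only if {u,v} is an edge of Σ; (iii) for any three pairwise adjacent vertices u, v, w, the points T(u), T(v), T(w) are not collinear; (iv) Σ contains no four pairwise adjacent vertices (no K₄ subgraph). Then T is an embedding of Σ into ℂ: T is injective on V; for every edge {u,v} and every vertex w ∉ {u,v}, the point T(w) does not lie on the segment [T(u), T(v)]; and for any two distinct edges {u₁,v₁} and {u₂,v₂}, the segments [T(u₁),T(v₁)] and [T(u₂),T(v₂)] intersect exactly in the image under T of the common vertices of the two edges (in particular they are disjoint if the edges share no vertex). -/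
open scoped Matrix

/-! `O` is a contraction of `T` that is tight exactly on the edges. If `T w` lay on the image of
an edge `uv`, the triangle inequality for `O` would force `uw` and `wv` to be tight, hence edges,
and `uvw` would be a triangle with collinear image. Two edge images with a common endpoint then
meet only there, since otherwise one of the far endpoints would lie on the other edge image.
If the images of disjoint edges `ab`, `cd` cross at `(1 - s) a + s b = (1 - t) c + t d`, the
identity `norm_convexCombination_sub_convexCombination_sq` for `T` (where its left side vanishes)
and for `O` (where it is nonnegative) forces all four cross pairs to be tight: `abcd` is a `K₄`. -/

section Betweenness

variable {R V P : Type*} [Field R] [LinearOrder R] [IsStrictOrderedRing R] [AddCommGroup V]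
  [Module R V] [AddTorsor V P]

theorem Wbtw.wbtw_or_wbtw_of_wbtw {x y z p : P} (hy : Wbtw R x p y) (hz : Wbtw R x p z)
    (hp : p ≠ x) : Wbtw R x y z ∨ Wbtw R x z y :=
  wbtw_total_of_sameRay_vsub_left <|
    hy.sameRay_vsub_left.symm.trans hz.sameRay_vsub_left fun h =>
      (hp (vsub_eq_zero_iff_eq.1 h)).elim

end Betweenness

section StewartIdentity

variable {E : Type*} [NormedAddCommGroup E] [InnerProductSpace ℝ E]

theorem norm_convexCombination_sub_sq (a b x : E) (s : ℝ) :
    ‖(1 - s) • a + s • b - x‖ ^ 2 =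
      (1 - s) * ‖a - x‖ ^ 2 + s * ‖b - x‖ ^ 2 - s * (1 - s) * ‖a - b‖ ^ 2 := by
  have hp : (1 - s) • a + s • b - x = (1 - s) • (a - x) + s • (b - x) := by module
  have hab : a - b = (a - x) - (b - x) := by abel
  rw [hp, hab]
  generalize a - x = A, b - x = B
  rw [norm_add_sq_real, norm_sub_sq_real, norm_smul, norm_smul, real_inner_smul_left,
    real_inner_smul_right, Real.norm_eq_abs, Real.norm_eq_abs, mul_pow, mul_pow, sq_abs, sq_abs]
  ring

theorem norm_convexCombination_sub_convexCombination_sq (a b c d : E) (s t : ℝ) :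
    ‖(1 - s) • a + s • b - ((1 - t) • c + t • d)‖ ^ 2 =
      (1 - s) * (1 - t) * ‖a - c‖ ^ 2 + (1 - s) * t * ‖a - d‖ ^ 2 +
        s * (1 - t) * ‖b - c‖ ^ 2 + s * t * ‖b - d‖ ^ 2 -
        s * (1 - s) * ‖a - b‖ ^ 2 - t * (1 - t) * ‖c - d‖ ^ 2 := by
  rw [norm_convexCombination_sub_sq, norm_sub_rev a, norm_sub_rev b,
    norm_convexCombination_sub_sq c d a, norm_convexCombination_sub_sq c d b,
    norm_sub_rev c a, norm_sub_rev d a, norm_sub_rev c b, norm_sub_rev d b]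
  ring

end StewartIdentity

section EdgeTight

variable {E V : Type*} [NormedAddCommGroup E]

def IsEdgeTightContraction (G : SimpleGraph V) (T O : V → E) : Prop :=
  ∀ u v : V, u ≠ v →
    ‖O u - O v‖ ≤ ‖T u - T v‖ ∧ (‖O u - O v‖ = ‖T u - T v‖ ↔ G.Adj u v)

namespace IsEdgeTightContraction

variable {G : SimpleGraph V} {T O : V → E}

theorem norm_le (hc : IsEdgeTightContraction G T O) (u v : V) : ‖O u - O v‖ ≤ ‖T u - T v‖ := by
  rcases eq_or_ne u v with rfl | huv
  · simp
  · exact (hc u v huv).1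

theorem norm_eq_of_adj (hc : IsEdgeTightContraction G T O) {u v : V} (h : G.Adj u v) :
    ‖O u - O v‖ = ‖T u - T v‖ :=
  (hc u v h.ne).2.2 h

theorem adj_of_norm_le (hc : IsEdgeTightContraction G T O) {u v : V} (huv : u ≠ v)
    (h : ‖T u - T v‖ ≤ ‖O u - O v‖) : G.Adj u v :=
  (hc u v huv).2.1 (le_antisymm (hc u v huv).1 h)

theorem sq_norm_le (hc : IsEdgeTightContraction G T O) (u v : V) :
    ‖O u - O v‖ ^ 2 ≤ ‖T u - T v‖ ^ 2 :=
  pow_le_pow_left₀ (norm_nonneg _) (hc.norm_le u v) 2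

theorem adj_of_sq_norm_le (hc : IsEdgeTightContraction G T O) {u v : V} (huv : u ≠ v)
    (h : ‖T u - T v‖ ^ 2 ≤ ‖O u - O v‖ ^ 2) : G.Adj u v :=
  hc.adj_of_norm_le huv (le_of_pow_le_pow_left₀ two_ne_zero (norm_nonneg _) h)

theorem injective (hc : IsEdgeTightContraction G T O) (hT : ∀ u v : V, G.Adj u v → T u ≠ T v) :
    Function.Injective T := by
  intro u v huv
  by_contra hne
  exact hT u v (hc.adj_of_norm_le hne (by simp [huv])) huv

theorem eq_or_eq_of_mem_segment [NormedSpace ℝ E] (hc : IsEdgeTightContraction G T O)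
    (hnc : ∀ u v w : V, G.Adj u v → G.Adj v w → G.Adj u w →
      ¬ Collinear ℝ ({T u, T v, T w} : Set E))
    {u v w : V} (huv : G.Adj u v) (hw : T w ∈ segment ℝ (T u) (T v)) : w = u ∨ w = v := by
  by_contra! hne
  have hsplit : ‖T u - T w‖ + ‖T w - T v‖ = ‖T u - T v‖ := by
    simpa only [dist_eq_norm] using dist_add_dist_of_mem_segment hw
  have htri : ‖O u - O v‖ ≤ ‖O u - O w‖ + ‖O w - O v‖ := norm_sub_le_norm_sub_add_norm_sub _ _ _
  have huw := hc.norm_le u w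
  have hwv := hc.norm_le w v
  have huv' := hc.norm_eq_of_adj huv
  exact hnc u w v (hc.adj_of_norm_le hne.1.symm (by linarith))
    (hc.adj_of_norm_le hne.2 (by linarith)) huv (mem_segment_iff_wbtw.1 hw).collinear

theorem eq_of_mem_segment_of_mem_segment [NormedSpace ℝ E] (hc : IsEdgeTightContraction G T O)
    (hnc : ∀ u v w : V, G.Adj u v → G.Adj v w → G.Adj u w →
      ¬ Collinear ℝ ({T u, T v, T w} : Set E))
    {u v₁ v₂ : V} (h₁ : G.Adj u v₁) (h₂ : G.Adj u v₂) (hv : v₁ ≠ v₂) {p : E}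
    (hp₁ : p ∈ segment ℝ (T u) (T v₁)) (hp₂ : p ∈ segment ℝ (T u) (T v₂)) : p = T u := by
  by_contra hp
  rcases (mem_segment_iff_wbtw.1 hp₁).wbtw_or_wbtw_of_wbtw (mem_segment_iff_wbtw.1 hp₂) hp
    with h | h
  · rcases hc.eq_or_eq_of_mem_segment hnc h₂ h.mem_segment with h' | h'
    exacts [h₁.ne h'.symm, hv h']
  · rcases hc.eq_or_eq_of_mem_segment hnc h₁ h.mem_segment with h' | h'
    exacts [h₂.ne h'.symm, hv h'.symm]

theorem mem_range_of_mem_segment_of_mem_segment [InnerProductSpace ℝ E]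
    (hc : IsEdgeTightContraction G T O)
    (hK₄ : ¬ ∃ a b c d : V,
      G.Adj a b ∧ G.Adj a c ∧ G.Adj a d ∧ G.Adj b c ∧ G.Adj b d ∧ G.Adj c d)
    {a b c d : V} (hab : G.Adj a b) (hcd : G.Adj c d)
    (hac : a ≠ c) (had : a ≠ d) (hbc : b ≠ c) (hbd : b ≠ d) {p : E}
    (hp₁ : p ∈ segment ℝ (T a) (T b)) (hp₂ : p ∈ segment ℝ (T c) (T d)) : p ∈ Set.range T := by
  by_contra hp
  rw [segment_eq_image] at hp₁ hp₂
  obtain ⟨s, ⟨hs₀, hs₁⟩, rfl⟩ := hp₁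
  obtain ⟨t, ⟨ht₀, ht₁⟩, hst : (1 - t) • T c + t • T d = (1 - s) • T a + s • T b⟩ := hp₂
  have hs₀' : 0 < s := hs₀.lt_of_ne (by rintro rfl; exact hp ⟨a, by simp⟩)
  have hs₁' : s < 1 := hs₁.lt_of_ne (by rintro rfl; exact hp ⟨b, by simp⟩)
  have ht₀' : 0 < t := ht₀.lt_of_ne (by rintro rfl; exact hp ⟨c, by simpa using hst⟩)
  have ht₁' : t < 1 := ht₁.lt_of_ne (by rintro rfl; exact hp ⟨d, by simpa using hst⟩)
  have hT := norm_convexCombination_sub_convexCombination_sq (T a) (T b) (T c) (T d) s t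
  rw [← hst, sub_self, norm_zero] at hT
  have hO := norm_convexCombination_sub_convexCombination_sq (O a) (O b) (O c) (O d) s t
  rw [hc.norm_eq_of_adj hab, hc.norm_eq_of_adj hcd] at hO
  have hO₀ := sq_nonneg ‖(1 - s) • O a + s • O b - ((1 - t) • O c + t • O d)‖
  have defect_nonneg : ∀ x y : V, 0 ≤ ‖T x - T y‖ ^ 2 - ‖O x - O y‖ ^ 2 :=
    fun x y => sub_nonneg.2 (hc.sq_norm_le x y)
  have adj_of_weighted : ∀ x y : V, x ≠ y → ∀ w : ℝ, 0 < w →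
      w * (‖T x - T y‖ ^ 2 - ‖O x - O y‖ ^ 2) ≤ 0 → G.Adj x y := fun x y hxy w hw h =>
    hc.adj_of_sq_norm_le hxy (sub_nonpos.1 (nonpos_of_mul_nonpos_right h hw))
  have hs : 0 < 1 - s := sub_pos.2 hs₁'
  have ht : 0 < 1 - t := sub_pos.2 ht₁'
  have hac' := mul_nonneg (mul_pos hs ht).le (defect_nonneg a c)
  have had' := mul_nonneg (mul_pos hs ht₀').le (defect_nonneg a d)
  have hbc' := mul_nonneg (mul_pos hs₀' ht).le (defect_nonneg b c)
  have hbd' := mul_nonneg (mul_pos hs₀' ht₀').le (defect_nonneg b d)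
  exact hK₄ ⟨a, b, c, d, hab,
    adj_of_weighted a c hac _ (mul_pos hs ht) (by linarith),
    adj_of_weighted a d had _ (mul_pos hs ht₀') (by linarith),
    adj_of_weighted b c hbc _ (mul_pos hs₀' ht) (by linarith),
    adj_of_weighted b d hbd _ (mul_pos hs₀' ht₀') (by linarith), hcd⟩

theorem segment_inter_segment [InnerProductSpace ℝ E] (hc : IsEdgeTightContraction G T O)
    (hnc : ∀ u v w : V, G.Adj u v → G.Adj v w → G.Adj u w →
      ¬ Collinear ℝ ({T u, T v, T w} : Set E))
    (hK₄ : ¬ ∃ a b c d : V,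
      G.Adj a b ∧ G.Adj a c ∧ G.Adj a d ∧ G.Adj b c ∧ G.Adj b d ∧ G.Adj c d)
    {u₁ v₁ u₂ v₂ : V} (h₁ : G.Adj u₁ v₁) (h₂ : G.Adj u₂ v₂)
    (hne : ({u₁, v₁} : Set V) ≠ {u₂, v₂}) :
    segment ℝ (T u₁) (T v₁) ∩ segment ℝ (T u₂) (T v₂) = T '' ({u₁, v₁} ∩ {u₂, v₂}) := by
  apply subset_antisymm
  · rintro p ⟨hp₁, hp₂⟩
    obtain ⟨x, rfl⟩ : p ∈ Set.range T := by
      rcases eq_or_ne u₁ u₂ with rfl | h₁₁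
      · exact ⟨u₁, (hc.eq_of_mem_segment_of_mem_segment hnc h₁ h₂
          (by rintro rfl; exact hne rfl) hp₁ hp₂).symm⟩
      rcases eq_or_ne u₁ v₂ with rfl | h₁₂
      · exact ⟨u₁, (hc.eq_of_mem_segment_of_mem_segment hnc h₁ h₂.symm
          (by rintro rfl; exact hne (Set.pair_comm _ _)) hp₁ (segment_symm ℝ (T u₂) _ ▸ hp₂)).symm⟩
      rcases eq_or_ne v₁ u₂ with rfl | h₂₁
      · exact ⟨v₁, (hc.eq_of_mem_segment_of_mem_segment hnc h₁.symm h₂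
          (by rintro rfl; exact hne (Set.pair_comm _ _)) (segment_symm ℝ (T u₁) _ ▸ hp₁) hp₂).symm⟩
      rcases eq_or_ne v₁ v₂ with rfl | h₂₂
      · exact ⟨v₁, (hc.eq_of_mem_segment_of_mem_segment hnc h₁.symm h₂.symm
          (by rintro rfl; exact hne rfl) (segment_symm ℝ (T u₁) _ ▸ hp₁)
          (segment_symm ℝ (T u₂) _ ▸ hp₂)).symm⟩
      exact hc.mem_range_of_mem_segment_of_mem_segment hK₄ h₁ h₂ h₁₁ h₁₂ h₂₁ h₂₂ hp₁ hp₂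
    exact ⟨x, ⟨hc.eq_or_eq_of_mem_segment hnc h₁ hp₁, hc.eq_or_eq_of_mem_segment hnc h₂ hp₂⟩, rfl⟩
  · have mem_segment_of_mem_pair : ∀ {u v x : V}, x ∈ ({u, v} : Set V) →
        T x ∈ segment ℝ (T u) (T v) := by
      rintro u v x (rfl | rfl)
      exacts [left_mem_segment ℝ _ _, right_mem_segment ℝ _ _]
    rintro _ ⟨x, ⟨hx₁, hx₂⟩, rfl⟩
    exact ⟨mem_segment_of_mem_pair hx₁, mem_segment_of_mem_pair hx₂⟩

end IsEdgeTightContraction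

end EdgeTight

/-- if `T` weakly contracts to `O` off the edges (with equality
exactly on edges), images of edges are nondegenerate, triangles are embedded, and
there is no `K₄`, then `T` is an embedding of the graph `Σ` into `ℂ`. -/
theorem stmt14 {V : Type*} (G : SimpleGraph V) (T O : V → ℂ)
    (h1 : ∀ u v : V, G.Adj u v → T u ≠ T v)
    (h2 : ∀ u v : V, u ≠ v →
      ‖O u - O v‖ ≤ ‖T u - T v‖ ∧
      (‖O u - O v‖ = ‖T u - T v‖ ↔ G.Adj u v))
    (h3 : ∀ u v w : V, G.Adj u v → G.Adj v w → G.Adj u w →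
      ¬ Collinear ℝ ({T u, T v, T w} : Set ℂ))
    (h4 : ¬ ∃ a b c d : V,
      G.Adj a b ∧ G.Adj a c ∧ G.Adj a d ∧ G.Adj b c ∧ G.Adj b d ∧ G.Adj c d) :
    Function.Injective T ∧
    (∀ u v w : V, G.Adj u v → w ≠ u → w ≠ v → T w ∉ segment ℝ (T u) (T v)) ∧
    (∀ u₁ v₁ u₂ v₂ : V, G.Adj u₁ v₁ → G.Adj u₂ v₂ →
      ({u₁, v₁} : Set V) ≠ ({u₂, v₂} : Set V) →
      segment ℝ (T u₁) (T v₁) ∩ segment ℝ (T u₂) (T v₂) =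
        T '' (({u₁, v₁} : Set V) ∩ ({u₂, v₂} : Set V))) := by
  have hc : IsEdgeTightContraction G T O := h2
  exact ⟨hc.injective h1,
    fun u v w huv hwu hwv hw => (hc.eq_or_eq_of_mem_segment h3 huv hw).elim hwu hwv,
    fun _ _ _ _ h₁ h₂ hne => hc.segment_inter_segment h3 h4 h₁ h₂ hne⟩
end

section
/- There do not exist points T₁, T₂, T₃, T₄, O₁, O₂, O₃, O₄ ∈ ℂ such that: the open segments (T₁,T₃) and (T₂,T₄) have a common point; |O₁ − O₃| = |T₁ − T₃| and |O₂ − O₄| = |T₂ − T₄|; |O_i − O_{i+1}| ≤ |T_i − T_{i+1}| for i = 1, 2, 3, 4 (indices modulo 4, so the four side inequalities are between consecutive indices 12, 23, 34, 41); and at least one of these four side inequalities is strict. (In words: a planar quadrilateral with crossing diagonals cannot be 'folded' so that both diagonal lengths are preserved while all four side lengths weakly decrease and at least one strictly decreases.) -/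
open scoped Matrix

/-! Let the diagonals of `T` cross at `X = u T₂ + v T₄`, and put `Z = u O₂ + v O₄`. Stewart's
theorem expresses `|PX|²` as `u |PT₂|² + v |PT₄|² - uv |T₂T₄|²`; since `|O₂O₄| = |T₂T₄|`, the side
inequalities give `|O₁Z| ≤ |T₁X|` and `|O₃Z| ≤ |T₃X|`, one of them strict. Hence
`|O₁O₃| ≤ |O₁Z| + |ZO₃| < |T₁X| + |XT₃| = |T₁T₃|`, contradicting `|O₁O₃| = |T₁T₃|`. -/

section

variable {E : Type*} [NormedAddCommGroup E] [InnerProductSpace ℝ E]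

theorem dist_smul_add_smul_sq {u v : ℝ} (huv : u + v = 1) (p b c : E) :
    dist p (u • b + v • c) ^ 2 = u * dist p b ^ 2 + v * dist p c ^ 2 - u * v * dist b c ^ 2 := by
  obtain rfl : v = 1 - u := by linarith
  have hp : p - (u • b + (1 - u) • c) = u • (p - b) + (1 - u) • (p - c) := by module
  have hbc : b - c = (p - c) - (p - b) := by abel
  rw [dist_eq_norm, dist_eq_norm, dist_eq_norm, dist_eq_norm, hp, hbc, norm_add_sq_real,
    norm_sub_sq_real (p - c), norm_smul, norm_smul, real_inner_smul_left, real_inner_smul_right,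
    real_inner_comm (p - b)]
  simp only [Real.norm_eq_abs, mul_pow, sq_abs]
  ring

theorem dist_smul_add_smul_le {u v : ℝ} (hu : 0 ≤ u) (hv : 0 ≤ v) (huv : u + v = 1)
    {p b c p' b' c' : E} (hbc : dist b c = dist b' c')
    (hb : dist p b ≤ dist p' b') (hc : dist p c ≤ dist p' c') :
    dist p (u • b + v • c) ≤ dist p' (u • b' + v • c') := by
  refine le_of_pow_le_pow_left₀ two_ne_zero dist_nonneg ?_
  rw [dist_smul_add_smul_sq huv, dist_smul_add_smul_sq huv, hbc]
  gcongr

theorem dist_smul_add_smul_lt {u v : ℝ} (hu : 0 < u) (hv : 0 < v) (huv : u + v = 1)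
    {p b c p' b' c' : E} (hbc : dist b c = dist b' c')
    (hb : dist p b ≤ dist p' b') (hc : dist p c ≤ dist p' c')
    (h : dist p b < dist p' b' ∨ dist p c < dist p' c') :
    dist p (u • b + v • c) < dist p' (u • b' + v • c') := by
  refine lt_of_pow_lt_pow_left₀ 2 dist_nonneg ?_
  rw [dist_smul_add_smul_sq huv, dist_smul_add_smul_sq huv, hbc]
  gcongr ?_ - _
  rcases h with h | h
  · exact add_lt_add_of_lt_of_le (by gcongr) (by gcongr)
  · exact add_lt_add_of_le_of_lt (by gcongr) (by gcongr)

end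

/-- a planar quadrilateral with crossing diagonals cannot be
folded so that both diagonal lengths are preserved while all four side lengths
weakly decrease and at least one strictly decreases. -/
theorem stmt15 :
    ¬ ∃ T1 T2 T3 T4 O1 O2 O3 O4 : ℂ,
      (openSegment ℝ T1 T3 ∩ openSegment ℝ T2 T4).Nonempty ∧
      dist O1 O3 = dist T1 T3 ∧ dist O2 O4 = dist T2 T4 ∧
      dist O1 O2 ≤ dist T1 T2 ∧ dist O2 O3 ≤ dist T2 T3 ∧
      dist O3 O4 ≤ dist T3 T4 ∧ dist O4 O1 ≤ dist T4 T1 ∧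
      (dist O1 O2 < dist T1 T2 ∨ dist O2 O3 < dist T2 T3 ∨
        dist O3 O4 < dist T3 T4 ∨ dist O4 O1 < dist T4 T1) := by
  rintro ⟨T1, T2, T3, T4, O1, O2, O3, O4, ⟨X, hX13, u, v, hu, hv, huv, rfl⟩, h13, h24, h12, h23,
    h34, h41, hstr⟩
  simp only [dist_comm O2 O3, dist_comm T2 T3, dist_comm O4 O1, dist_comm T4 T1] at h23 h41 hstr
  have h1 := dist_smul_add_smul_le hu.le hv.le huv h24 h12 h41
  have h3 := dist_smul_add_smul_le hu.le hv.le huv h24 h23 h34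
  set X := u • T2 + v • T4
  set Z := u • O2 + v • O4
  have hsum : dist O1 Z + dist Z O3 < dist T1 X + dist X T3 := by
    rw [dist_comm Z O3, dist_comm X T3]
    rcases hstr with h | h | h | h
    · linarith [dist_smul_add_smul_lt hu hv huv h24 h12 h41 (.inl h)]
    · linarith [dist_smul_add_smul_lt hu hv huv h24 h23 h34 (.inl h)]
    · linarith [dist_smul_add_smul_lt hu hv huv h24 h23 h34 (.inr h)]
    · linarith [dist_smul_add_smul_lt hu hv huv h24 h12 h41 (.inr h)]
  have hX : dist T1 X + dist X T3 = dist T1 T3 :=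
    dist_add_dist_of_mem_segment (openSegment_subset_segment ℝ T1 T3 hX13)
  linarith [dist_triangle O1 Z O3]
end

section
/- Let 2 ≤ k ≤ n−2 and let λ ∈ λ⁺_{k,n}. Suppose that Θ(λ) ∈ λ̃⁺_{k,n}, i.e. [i i+1]_{Θ(λ)} > 0 for all i ∈ {1,…,n} and wind(Θ(λ)) = (k+1)π (so that (λ, Θ(λ)) ∈ λλ̃⁺_{k,n}, orthogonality being automatic). Then n = 2k. -/
open scoped Matrix

/-!
Column by column, `Θ(λ)_i = s_i · ρ(λ_i)`, where `ρ(x, y) = (x, -y)` is a reflection and the `s_i`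
are real scalars. Hence `[i i+1]_{Θ(λ)} = -s_i s_{i+1} ⟨i i+1⟩_λ`, so positivity of both families of
consecutive brackets forces `s_i s_{i+1} < 0`. A reflection preserves unsigned angles and reversing
one of two vectors turns their angle `α` into `π - α`, so every consecutive angle of `Θ(λ)` is
`π` minus that of `λ`. Summing, `wind Θ(λ) = nπ - wind λ`, i.e. `(k+1)π = nπ - (k-1)π`.
-/

open Finset

def reflect (v : Fin 2 → ℝ) : Fin 2 → ℝ := fun r => if r = 0 then v 0 else -v 1

@[simp] lemma reflect_apply_zero (v : Fin 2 → ℝ) : reflect v 0 = v 0 := if_pos rfl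

@[simp] lemma reflect_apply_one (v : Fin 2 → ℝ) : reflect v 1 = -v 1 := if_neg one_ne_zero

lemma ang2_smul_reflect {a b : ℝ} (hab : a * b < 0) (v w : Fin 2 → ℝ) :
    ang2 (a • reflect v) (b • reflect w) = Real.pi - ang2 v w := by
  have hnorm : ∀ (c : ℝ) (u : Fin 2 → ℝ),
      Real.sqrt ((c • reflect u) 0 ^ 2 + (c • reflect u) 1 ^ 2)
        = |c| * Real.sqrt (u 0 ^ 2 + u 1 ^ 2) := by
    intro c u
    rw [← Real.sqrt_sq_eq_abs, ← Real.sqrt_mul (sq_nonneg c)]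
    congr 1
    simp only [Pi.smul_apply, smul_eq_mul, reflect_apply_zero, reflect_apply_one]
    ring
  have habs : |a| * |b| = -(a * b) := by rw [← abs_mul, abs_of_neg hab]
  unfold ang2
  rw [hnorm, hnorm, ← Real.arccos_neg]
  congr 1
  have hdot : (a • reflect v) 0 * (b • reflect w) 0 + (a • reflect v) 1 * (b • reflect w) 1
      = (a * b) * (v 0 * w 0 + v 1 * w 1) := by
    simp only [Pi.smul_apply, smul_eq_mul, reflect_apply_zero, reflect_apply_one]
    ring
  rw [hdot, mul_mul_mul_comm, habs, neg_mul, div_neg, mul_div_mul_left _ _ hab.ne]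

noncomputable def thetaScale {n : ℕ} (ε : ℝ) (lam : Matrix (Fin 2) (Fin n) ℝ) : Fin n → ℝ :=
  fun j => (-1 : ℝ) ^ (j : ℕ) * tcoef ε lam ((j : ℕ) : ℤ)

lemma colExt_Theta {n : ℕ} (ε : ℝ) (lam : Matrix (Fin 2) (Fin n) ℝ) (i : ℤ) :
    colExt ε (Theta ε lam) i = vecExt 1 (thetaScale ε lam) i • reflect (colExt ε lam i) := by
  by_cases hn : 0 < n
  · ext r
    simp only [colExt, vecExt, dif_pos hn, Theta, Matrix.of_apply, thetaScale, one_zpow, one_mul,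
      Pi.smul_apply, smul_eq_mul, reflect]
    split_ifs <;> ring
  · ext r
    simp [colExt, vecExt, hn]

lemma brkt_Theta {n : ℕ} (ε : ℝ) (lam : Matrix (Fin 2) (Fin n) ℝ) (i j : ℤ) :
    brkt ε (Theta ε lam) i j
      = -(vecExt 1 (thetaScale ε lam) i * vecExt 1 (thetaScale ε lam) j) * brkt ε lam i j := by
  simp only [brkt, colExt_Theta, Pi.smul_apply, smul_eq_mul, reflect_apply_zero,
    reflect_apply_one]
  ring

lemma wind_Theta {n : ℕ} (ε : ℝ) (lam : Matrix (Fin 2) (Fin n) ℝ)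
    (hlam : ∀ i ∈ range n, 0 < brkt ε lam i (i + 1))
    (hth : ∀ i ∈ range n, 0 < brkt ε (Theta ε lam) i (i + 1)) :
    wind ε (Theta ε lam) = n * Real.pi - wind ε lam := by
  have hterm : ∀ i ∈ range n,
      ang2 (colExt ε (Theta ε lam) i) (colExt ε (Theta ε lam) (i + 1))
        = Real.pi - ang2 (colExt ε lam i) (colExt ε lam (i + 1)) := by
    intro i hi
    have hsign : vecExt 1 (thetaScale ε lam) i * vecExt 1 (thetaScale ε lam) (i + 1) < 0 := by
      have h := hth i hi
      rw [brkt_Theta] at h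
      exact neg_pos.1 (pos_of_mul_pos_left h (hlam i hi).le)
    rw [colExt_Theta, colExt_Theta]
    exact ang2_smul_reflect hsign _ _
  rw [wind, sum_congr rfl hterm, sum_sub_distrib, sum_const, card_range, nsmul_eq_mul, wind]

theorem stmt17_general (n k : ℕ)
    (lam : Matrix (Fin 2) (Fin n) ℝ) (hlam : lamPlus n (k : ℤ) lam)
    (hth : latPlus n (k : ℤ) (Theta (sgn (k : ℤ)) lam)) :
    n = 2 * k := by
  obtain ⟨hlam_pos, hlam_wind⟩ := hlam
  obtain ⟨hth_pos, hth_wind⟩ := hth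
  rw [wind_Theta _ lam hlam_pos hth_pos, hlam_wind] at hth_wind
  push_cast at hth_wind
  have h : ((n : ℝ) - 2 * k) * Real.pi = 0 := by linarith
  have : (n : ℝ) = 2 * k := by
    linarith [(mul_eq_zero.1 h).resolve_right Real.pi_ne_zero]
  exact_mod_cast this

/-- if `λ ∈ λ⁺_{k,n}` and `Θ(λ) ∈ λ̃⁺_{k,n}` (so that
`(λ, Θ(λ)) ∈ λλ̃⁺_{k,n}`, a perfect t-immersion situation), then `n = 2k`. -/
theorem stmt17 (n k : ℕ) (hk2 : 2 ≤ k) (hkn : k + 2 ≤ n)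
    (lam : Matrix (Fin 2) (Fin n) ℝ) (hlam : lamPlus n (k : ℤ) lam)
    (hth : latPlus n (k : ℤ) (Theta (sgn (k : ℤ)) lam)) :
    n = 2 * k :=
  stmt17_general n k lam hlam hth
end
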